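/- arXiv:2304.01034 — 10 statements merged into one kernel-verified Lean document; each statement's English description precedes it below -/
import Mathlib

section
/- Let g = h ⊕ m be a reductive decomposition of a finite-dimensional real Lie algebra g, and let F be a Minkowski norm on m that is both cyclic and naturally reductive with respect to this decomposition. Then [m,m] ⊆ h, i.e. the decomposition is a Cartan decomposition (the corresponding homogeneous Finsler manifold is a symmetric space). -/
/-!
The fundamental tensor `g_y` of a Minkowski norm is unchanged under `y ↦ c • y` for `c > 0`, so the
Cartan tensor `C_y(u, v, y)` vanishes. Natural reductivity with `v = y` therefore reads
`g_y([a,u]_m, y) = g_y([y,a]_m, u)`, and substituting this into the cyclic identity turns it into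
`T(a,b) = 2 T(b,a)` for `T(a,b) = g_y([y,a]_m, b)`. Hence `T = 4 T = 0`, and taking `b = [y,a]_m`
positive definiteness of `g_y` forces `[y,a]_m = 0`.
-/

noncomputable section

/-- The fundamental tensor `g_y(u,v) = (1/2)·∂²/∂s∂t|_{s=t=0} F(y+su+tv)²`. -/
def gTensor {V : Type*} [NormedAddCommGroup V] [NormedSpace ℝ V]
    (F : V → ℝ) (y u v : V) : ℝ :=
  (1 / 2) * deriv (fun s : ℝ => deriv (fun t : ℝ => (F (y + s • u + t • v)) ^ 2) 0) 0

/-- The Cartan tensor `C_y(u,v,w) = (1/2)·d/dt|_{t=0} g_{y+tw}(u,v)`. -/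
def cartanTensor {V : Type*} [NormedAddCommGroup V] [NormedSpace ℝ V]
    (F : V → ℝ) (y u v w : V) : ℝ :=
  (1 / 2) * deriv (fun t : ℝ => gTensor F (y + t • w) u v) 0

/-- `F` is a Minkowski norm: positive and smooth away from `0`, positively
homogeneous of degree one, with positive-definite symmetric bilinear fundamental tensor. -/
structure IsMinkowskiNorm {V : Type*} [NormedAddCommGroup V] [NormedSpace ℝ V]
    (F : V → ℝ) : Prop where
  pos : ∀ y : V, y ≠ 0 → 0 < F y
  smooth : ContDiffOn ℝ (⊤ : ℕ∞) F {(0 : V)}ᶜ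
  homog : ∀ c : ℝ, 0 < c → ∀ y : V, F (c • y) = c * F y
  g_symm : ∀ y : V, y ≠ 0 → ∀ u v : V, gTensor F y u v = gTensor F y v u
  g_add_left : ∀ y : V, y ≠ 0 → ∀ u u' v : V,
    gTensor F y (u + u') v = gTensor F y u v + gTensor F y u' v
  g_smul_left : ∀ y : V, y ≠ 0 → ∀ (c : ℝ) (u v : V),
    gTensor F y (c • u) v = c * gTensor F y u v
  g_posdef : ∀ y : V, y ≠ 0 → ∀ u : V, u ≠ 0 → 0 < gTensor F y u u

/-- A Lie algebra structure on the real vector space `V`, given as a bilinear map. -/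
structure IsLieBracket {V : Type*} [AddCommGroup V] [Module ℝ V]
    (L : V →ₗ[ℝ] V →ₗ[ℝ] V) : Prop where
  alternate : ∀ x : V, L x x = 0
  jacobi : ∀ x y z : V, L x (L y z) = L (L x y) z + L y (L x z)

/-- The cyclic condition for a Minkowski norm on a Lie algebra. -/
def IsCyclicNorm {V : Type*} [NormedAddCommGroup V] [NormedSpace ℝ V]
    (L : V →ₗ[ℝ] V →ₗ[ℝ] V) (F : V → ℝ) : Prop :=
  ∀ y : V, y ≠ 0 → ∀ x z : V,
    gTensor F y (L x y) z + gTensor F y (L y z) x + gTensor F y (L z x) y = 0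

/-- The Riemann curvature `R_y(u) = D_η N(y,u) − N(y,N(y,u)) + N(y,[y,u]) − [y,N(y,u)]`. -/
def RiemannCurv {V : Type*} [NormedAddCommGroup V] [NormedSpace ℝ V]
    (L : V →ₗ[ℝ] V →ₗ[ℝ] V) (η : V → V) (N : V → V → V) (y u : V) : V :=
  fderiv ℝ (fun z => N z u) y (η y) - N y (N y u) + N y (L y u) - L y (N y u)

/-- Projection onto `m` along `h` in the decomposition `g = h ⊕ m`. -/
def projTo {V : Type*} [AddCommGroup V] [Module ℝ V] (h m : Submodule ℝ V)
    (hcompl : IsCompl h m) : V →ₗ[ℝ] m :=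
  m.linearProjOfIsCompl h hcompl.symm

/-- The inner product making the basis `e` orthonormal. -/
def basisInner {V : Type*} [AddCommGroup V] [Module ℝ V] {ι : Type*} [Fintype ι]
    (e : Module.Basis ι ℝ V) (x y : V) : ℝ :=
  ∑ k, e.repr x k * e.repr y k

open Filter Topology

theorem deriv_deriv_comp_mul_left (φ : ℝ → ℝ → ℝ) (a : ℝ) :
    deriv (fun s => deriv (fun t => φ (a * s) (a * t)) 0) 0
      = a ^ 2 * deriv (fun s => deriv (φ s) 0) 0 := by
  have inner : ∀ s, deriv (fun t => φ (a * s) (a * t)) 0 = a * deriv (φ (a * s)) 0 := fun s => by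
    simpa using deriv_comp_mul_left a (φ (a * s)) 0
  have outer : deriv (fun s => deriv (φ (a * s)) 0) 0 = a * deriv (fun s => deriv (φ s) 0) 0 := by
    simpa using deriv_comp_mul_left a (fun σ => deriv (φ σ) 0) 0
  simp_rw [inner, deriv_const_mul_field', outer]
  ring

section MinkowskiNorm

variable {V : Type*} [NormedAddCommGroup V] [NormedSpace ℝ V] {F : V → ℝ}

theorem gTensor_smul_base (hF : ∀ c : ℝ, 0 < c → ∀ y : V, F (c • y) = c * F y)
    {c : ℝ} (hc : 0 < c) (y u v : V) : gTensor F (c • y) u v = gTensor F y u v := by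
  have hscale : ∀ s t : ℝ, F (y + s • u + t • v) ^ 2
      = c⁻¹ ^ 2 * F (c • y + (c * s) • u + (c * t) • v) ^ 2 := fun s t => by
    rw [show c • y + (c * s) • u + (c * t) • v = c • (y + s • u + t • v) by
        simp only [smul_add, smul_smul], hF c hc]
    field_simp
  unfold gTensor
  simp_rw [hscale, deriv_const_mul_field']
  rw [deriv_deriv_comp_mul_left (fun s t => F (c • y + s • u + t • v) ^ 2)]
  field_simp

theorem cartanTensor_self (hF : ∀ c : ℝ, 0 < c → ∀ y : V, F (c • y) = c * F y)
    (y u v : V) : cartanTensor F y u v y = 0 := by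
  have hconst : (fun t : ℝ => gTensor F (y + t • y) u v) =ᶠ[𝓝 0] fun _ => gTensor F y u v := by
    filter_upwards [Ioi_mem_nhds neg_one_lt_zero] with t ht
    rw [show y + t • y = (1 + t) • y by rw [add_smul, one_smul],
      gTensor_smul_base hF (by linarith [Set.mem_Ioi.1 ht])]
  rw [cartanTensor, hconst.deriv_eq, deriv_const, mul_zero]

theorem IsMinkowskiNorm.gTensor_neg_left (hF : IsMinkowskiNorm F) {y : V} (hy : y ≠ 0)
    (u v : V) : gTensor F y (-u) v = -gTensor F y u v := by
  rw [← neg_one_smul ℝ u, hF.g_smul_left y hy, neg_one_mul]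

end MinkowskiNorm

def IsNaturallyReductiveNorm {V : Type*} [NormedAddCommGroup V] [NormedSpace ℝ V]
    (L : V →ₗ[ℝ] V →ₗ[ℝ] V) (F : V → ℝ) : Prop :=
  ∀ y : V, y ≠ 0 → ∀ x u v : V,
    gTensor F y (L x u) v + gTensor F y (L x v) u + 2 * cartanTensor F y (L x y) u v = 0

section CyclicNaturallyReductive

variable {V : Type*} [NormedAddCommGroup V] [NormedSpace ℝ V]
  {L : V →ₗ[ℝ] V →ₗ[ℝ] V} {F : V → ℝ} {y : V}

theorem IsNaturallyReductiveNorm.gTensor_apply_self_right (hnr : IsNaturallyReductiveNorm L F)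
    (hF : IsMinkowskiNorm F) (hL : L.IsAlt) (hy : y ≠ 0) (a u : V) :
    gTensor F y (L a u) y = gTensor F y (L y a) u := by
  have h := hnr y hy a u y
  rw [cartanTensor_self hF.homog, ← hL.neg y a, hF.gTensor_neg_left hy] at h
  linarith

theorem gTensor_apply_eq_two_mul (hcyc : IsCyclicNorm L F) (hnr : IsNaturallyReductiveNorm L F)
    (hF : IsMinkowskiNorm F) (hL : L.IsAlt) (hy : y ≠ 0) (a b : V) :
    gTensor F y (L y a) b = 2 * gTensor F y (L y b) a := by
  have h := hcyc y hy a b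
  rw [hnr.gTensor_apply_self_right hF hL hy b a, ← hL.neg y a, hF.gTensor_neg_left hy] at h
  linarith

theorem gTensor_apply_eq_zero (hcyc : IsCyclicNorm L F) (hnr : IsNaturallyReductiveNorm L F)
    (hF : IsMinkowskiNorm F) (hL : L.IsAlt) (hy : y ≠ 0) (a b : V) :
    gTensor F y (L y a) b = 0 := by
  have hab := gTensor_apply_eq_two_mul hcyc hnr hF hL hy a b
  have hba := gTensor_apply_eq_two_mul hcyc hnr hF hL hy b a
  linarith

theorem eq_zero_of_isCyclicNorm_of_isNaturallyReductiveNorm (hF : IsMinkowskiNorm F)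
    (hL : L.IsAlt) (hcyc : IsCyclicNorm L F) (hnr : IsNaturallyReductiveNorm L F) : L = 0 := by
  refine LinearMap.ext₂ fun y a => ?_
  rcases eq_or_ne y 0 with rfl | hy
  · simp
  by_contra hne
  have hpos := hF.g_posdef y hy _ hne
  rw [gTensor_apply_eq_zero hcyc hnr hF hL hy] at hpos
  exact hpos.false

end CyclicNaturallyReductive

def projBracket {g : Type*} [AddCommGroup g] [Module ℝ g] (L : g →ₗ[ℝ] g →ₗ[ℝ] g)
    (h m : Submodule ℝ g) (hcompl : IsCompl h m) : m →ₗ[ℝ] m →ₗ[ℝ] m :=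
  (L.compl₁₂ m.subtype m.subtype).compr₂ (projTo h m hcompl)

theorem isAlt_projBracket {g : Type*} [AddCommGroup g] [Module ℝ g] {L : g →ₗ[ℝ] g →ₗ[ℝ] g}
    (hL : ∀ x, L x x = 0) (h m : Submodule ℝ g) (hcompl : IsCompl h m) :
    (projBracket L h m hcompl).IsAlt := fun x => by
  simp [projBracket, hL]

theorem cyclic_naturally_reductive_implies_symmetric_general
    {g : Type*} [NormedAddCommGroup g] [NormedSpace ℝ g]
    (L : g →ₗ[ℝ] g →ₗ[ℝ] g) (hL : IsLieBracket L)
    (h m : Submodule ℝ g) (hcompl : IsCompl h m)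
    (F : m → ℝ) (hF : IsMinkowskiNorm F)
    (hcyclic : ∀ y : m, y ≠ 0 → ∀ x z : m,
      gTensor F y (projTo h m hcompl (L (x : g) (y : g))) z
        + gTensor F y (projTo h m hcompl (L (y : g) (z : g))) x
        + gTensor F y (projTo h m hcompl (L (z : g) (x : g))) y = 0)
    (hnatred : ∀ y : m, y ≠ 0 → ∀ x u v : m,
      gTensor F y (projTo h m hcompl (L (x : g) (u : g))) v
        + gTensor F y (projTo h m hcompl (L (x : g) (v : g))) u
        + 2 * cartanTensor F y (projTo h m hcompl (L (x : g) (y : g))) u v = 0) :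
    ∀ x y : m, L (x : g) (y : g) ∈ h := by
  have hzero : projBracket L h m hcompl = 0 :=
    eq_zero_of_isCyclicNorm_of_isNaturallyReductiveNorm hF
      (isAlt_projBracket hL.alternate h m hcompl) hcyclic hnatred
  intro x y
  exact (Submodule.projectionOnto_apply_eq_zero_iff hcompl.symm).1
    (LinearMap.congr_fun₂ hzero x y)

/-- If a Minkowski norm on `m` is both cyclic and naturally reductive
with respect to the reductive decomposition `g = h ⊕ m`, then `[m,m] ⊆ h`,
i.e. the decomposition is a Cartan decomposition (the homogeneous space is symmetric). -/
theorem cyclic_naturally_reductive_implies_symmetric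
    {g : Type*} [NormedAddCommGroup g] [NormedSpace ℝ g] [FiniteDimensional ℝ g]
    (L : g →ₗ[ℝ] g →ₗ[ℝ] g) (hL : IsLieBracket L)
    (h m : Submodule ℝ g) (hcompl : IsCompl h m)
    (hsubalg : ∀ x ∈ h, ∀ y ∈ h, L x y ∈ h)
    (hreduct : ∀ x ∈ h, ∀ y ∈ m, L x y ∈ m)
    (F : m → ℝ) (hF : IsMinkowskiNorm F)
    (hcyclic : ∀ y : m, y ≠ 0 → ∀ x z : m,
      gTensor F y (projTo h m hcompl (L (x : g) (y : g))) z
        + gTensor F y (projTo h m hcompl (L (y : g) (z : g))) x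
        + gTensor F y (projTo h m hcompl (L (z : g) (x : g))) y = 0)
    (hnatred : ∀ y : m, y ≠ 0 → ∀ x u v : m,
      gTensor F y (projTo h m hcompl (L (x : g) (u : g))) v
        + gTensor F y (projTo h m hcompl (L (x : g) (v : g))) u
        + 2 * cartanTensor F y (projTo h m hcompl (L (x : g) (y : g))) u v = 0) :
    ∀ x y : m, L (x : g) (y : g) ∈ h :=
  cyclic_naturally_reductive_implies_symmetric_general L hL h m hcompl F hF hcyclic hnatred

end
end

section
/- Assume the inner product α is cyclic and the Douglas condition α(X,[u,v]_m) = 0 holds for all u,v ∈ m. Then the Minkowski norm F = √(α(y,y))·φ(α(X,y)/√(α(y,y))) is cyclic with respect to the reductive decomposition if and only if Φ(r)·Ψ(u,v,y) = 0 for all u,v ∈ m and y ∈ m∖{0}, where r = α(X,y)/√(α(y,y)). -/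
noncomputable section

/-! Differentiating `F² = α(y,y)·φ(r)²` twice along lines gives the fundamental tensor of an
`(α,β)`-norm, `g_y = ρ α + ρ₀ β⊗β + Φ (β⊗α_y + α_y⊗β) − r Φ α_y⊗α_y` with
`α_y = α(y,·)/√α(y,y)`. In the cyclic sum of `g_y` the `ρ`-terms cancel because `α` is cyclic,
the terms containing `β` of a bracket vanish by the Douglas condition, and what remains is
`Φ(r)·Ψ(z,x,y) / α(y,y)^{3/2}`. -/

open Topology

def alphaBetaRho (φ : ℝ → ℝ) (r : ℝ) : ℝ := φ r ^ 2 - r * φ r * deriv φ r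

def alphaBetaRho₀ (φ : ℝ → ℝ) (r : ℝ) : ℝ := deriv φ r ^ 2 + φ r * deriv (deriv φ) r

def alphaBetaPhi (φ : ℝ → ℝ) (r : ℝ) : ℝ :=
  φ r * deriv φ r - r * deriv φ r ^ 2 - r * φ r * deriv (deriv φ) r

section Calculus

variable {φ : ℝ → ℝ} {a b : ℝ → ℝ} {a' b' t : ℝ}

theorem hasDerivAt_alphaBetaRho {r : ℝ} (hφ : DifferentiableAt ℝ φ r)
    (hφ' : DifferentiableAt ℝ (deriv φ) r) :
    HasDerivAt (alphaBetaRho φ) (alphaBetaPhi φ r) r := by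
  have h := ((hφ.hasDerivAt.pow 2).sub
    (((hasDerivAt_id r).mul hφ.hasDerivAt).mul hφ'.hasDerivAt))
  refine h.congr_deriv ?_
  simp only [alphaBetaPhi, Pi.mul_apply, id]
  ring

theorem hasDerivAt_div_sqrt (ha : HasDerivAt a a' t) (hb : HasDerivAt b b' t) (hpos : 0 < a t) :
    HasDerivAt (fun s => b s / √(a s))
      ((2 * a t * b' - a' * b t) / (2 * a t * √(a t))) t := by
  have hsqrt : √(a t) ≠ 0 := (Real.sqrt_pos.mpr hpos).ne'
  refine (hb.div (ha.sqrt hpos.ne') hsqrt).congr_deriv ?_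
  field_simp
  rw [Real.sq_sqrt hpos.le]
  ring

theorem hasDerivAt_sqrt_mul_comp_div_sqrt_sq (hφ : DifferentiableAt ℝ φ (b t / √(a t)))
    (ha : HasDerivAt a a' t) (hb : HasDerivAt b b' t) (hpos : 0 < a t) :
    HasDerivAt (fun s => (√(a s) * φ (b s / √(a s))) ^ 2)
      (a' * alphaBetaRho φ (b t / √(a t))
        + 2 * √(a t) * b' * (φ (b t / √(a t)) * deriv φ (b t / √(a t)))) t := by
  have hsqrt : 0 < √(a t) := Real.sqrt_pos.mpr hpos
  have h := (((ha.sqrt hpos.ne').mul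
    (hφ.hasDerivAt.comp t (hasDerivAt_div_sqrt ha hb hpos))).pow 2)
  refine h.congr_deriv ?_
  simp only [alphaBetaRho, Pi.mul_apply, Function.comp_apply]
  have ha_sq : a t = √(a t) ^ 2 := (Real.sq_sqrt hpos.le).symm
  set q := √(a t)
  rw [ha_sq]
  field_simp
  ring

end Calculus

section LineDerivatives

variable {V : Type*} [AddCommGroup V] [Module ℝ V]

theorem LinearMap.hasDerivAt_apply_add_smul (f : V →ₗ[ℝ] ℝ) (w v : V) (t : ℝ) :
    HasDerivAt (fun s : ℝ => f (w + s • v)) (f v) t := by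
  simp only [map_add, map_smul, smul_eq_mul]
  simpa using ((hasDerivAt_id t).mul_const (f v)).const_add (f w)

theorem LinearMap.hasDerivAt_apply_self_add_smul (α : V →ₗ[ℝ] V →ₗ[ℝ] ℝ)
    (hα : ∀ u v, α u v = α v u) (w v : V) :
    HasDerivAt (fun s : ℝ => α (w + s • v) (w + s • v)) (2 * α w v) 0 := by
  have hexpand : (fun s : ℝ => α (w + s • v) (w + s • v))
      = fun s => α w w + s * (α w v + α v w) + s ^ 2 * α v v := by
    funext s
    simp only [map_add, map_smul, LinearMap.add_apply, LinearMap.smul_apply, smul_eq_mul]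
    ring
  rw [hexpand, hα v w]
  refine ((((hasDerivAt_id (0 : ℝ)).mul_const (α w v + α w v)).const_add (α w w)).add
    ((hasDerivAt_pow 2 (0 : ℝ)).mul_const (α v v))).congr_deriv ?_
  norm_num
  ring

end LineDerivatives

section AlphaBetaNorm

variable {V : Type*} [AddCommGroup V] [Module ℝ V]
  {α : V →ₗ[ℝ] V →ₗ[ℝ] ℝ} {β : V →ₗ[ℝ] ℝ} {φ : ℝ → ℝ}

variable (α β φ) in
def alphaBetaNorm (y : V) : ℝ := √(α y y) * φ (β y / √(α y y))

variable (α β φ) in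
def alphaBetaNormSqDeriv (w v : V) : ℝ :=
  2 * α w v * alphaBetaRho φ (β w / √(α w w))
    + 2 * √(α w w) * β v * (φ (β w / √(α w w)) * deriv φ (β w / √(α w w)))

variable (β) in
theorem hasDerivAt_alphaBetaNorm_sq (hα : ∀ u v, α u v = α v u) (hφ : Differentiable ℝ φ)
    {w : V} (hw : 0 < α w w) (v : V) :
    HasDerivAt (fun t : ℝ => alphaBetaNorm α β φ (w + t • v) ^ 2)
      (alphaBetaNormSqDeriv α β φ w v) 0 := by
  have h := hasDerivAt_sqrt_mul_comp_div_sqrt_sq (hφ _)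
    (α.hasDerivAt_apply_self_add_smul hα w v) (β.hasDerivAt_apply_add_smul w v 0)
    (by simpa using hw)
  simp only [zero_smul, add_zero] at h
  exact h

theorem hasDerivAt_alphaBetaNormSqDeriv (hα : ∀ u v, α u v = α v u) (hφ : Differentiable ℝ φ)
    (hφ' : Differentiable ℝ (deriv φ)) {y : V} (hy : 0 < α y y) (u v : V) {r : ℝ}
    (hr : β y / √(α y y) = r) :
    HasDerivAt (fun s : ℝ => alphaBetaNormSqDeriv α β φ (y + s • u) v)
      (2 * (α u v * alphaBetaRho φ r
        + alphaBetaPhi φ r * (α y v * β u + α y u * β v) / √(α y y)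
        + alphaBetaRho₀ φ r * (β u * β v)
        - alphaBetaPhi φ r * r * (α y u * α y v) / α y y)) 0 := by
  subst hr
  have ha := α.hasDerivAt_apply_self_add_smul hα y u
  have hy' : 0 < α (y + (0 : ℝ) • u) (y + (0 : ℝ) • u) := by simpa using hy
  have hr' := hasDerivAt_div_sqrt ha (β.hasDerivAt_apply_add_smul y u 0) hy'
  have hc := (α.flip v).hasDerivAt_apply_add_smul y u 0
  have h := ((hc.const_mul 2).mul
      ((hasDerivAt_alphaBetaRho (hφ _) (hφ' _)).comp 0 hr')).add
    ((((ha.sqrt hy'.ne').const_mul 2).mul_const (β v)).mul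
      (((hφ _).hasDerivAt.comp 0 hr').mul ((hφ' _).hasDerivAt.comp 0 hr')))
  simp only [Pi.mul_apply, Function.comp_apply, zero_smul, add_zero] at h
  refine h.congr_deriv ?_
  simp only [LinearMap.flip_apply, alphaBetaPhi, alphaBetaRho₀]
  have hsqrt : 0 < √(α y y) := Real.sqrt_pos.mpr hy
  have hy_sq : α y y = √(α y y) ^ 2 := (Real.sq_sqrt hy.le).symm
  set q := √(α y y)
  rw [hy_sq]
  field_simp
  ring

end AlphaBetaNorm

section FundamentalTensor

variable {V : Type*} [NormedAddCommGroup V] [NormedSpace ℝ V]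
  {α : V →ₗ[ℝ] V →ₗ[ℝ] ℝ} {β : V →ₗ[ℝ] ℝ} {φ : ℝ → ℝ}

theorem gTensor_alphaBetaNorm (hα : ∀ u v, α u v = α v u) (hφ : Differentiable ℝ φ)
    (hφ' : Differentiable ℝ (deriv φ)) {y : V} (hy : 0 < α y y) (u v : V) {r : ℝ}
    (hr : β y / √(α y y) = r) :
    gTensor (alphaBetaNorm α β φ) y u v
      = α u v * alphaBetaRho φ r
        + alphaBetaPhi φ r * (α y v * β u + α y u * β v) / √(α y y)
        + alphaBetaRho₀ φ r * (β u * β v)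
        - alphaBetaPhi φ r * r * (α y u * α y v) / α y y := by
  have hpos : ∀ᶠ s in 𝓝 (0 : ℝ), 0 < α (y + s • u) (y + s • u) :=
    (α.hasDerivAt_apply_self_add_smul hα y u).continuousAt.tendsto.eventually_const_lt
      (by simpa using hy)
  have hfirst :
      (fun s : ℝ => deriv (fun t : ℝ => alphaBetaNorm α β φ (y + s • u + t • v) ^ 2) 0)
        =ᶠ[𝓝 0] fun s => alphaBetaNormSqDeriv α β φ (y + s • u) v :=
    hpos.mono fun s hs => (hasDerivAt_alphaBetaNorm_sq β hα hφ hs v).deriv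
  rw [gTensor, hfirst.deriv_eq, (hasDerivAt_alphaBetaNormSqDeriv hα hφ hφ' hy u v hr).deriv]
  ring

theorem cyclicSum_gTensor_alphaBetaNorm (hα : ∀ u v, α u v = α v u)
    (hφ : Differentiable ℝ φ) (hφ' : Differentiable ℝ (deriv φ)) (B : V → V → V)
    (hcyc : ∀ x y z, α (B x y) z + α (B y z) x + α (B z x) y = 0)
    (hβ : ∀ u v, β (B u v) = 0) {y : V} (hy : 0 < α y y) (x z : V) :
    gTensor (alphaBetaNorm α β φ) y (B x y) z + gTensor (alphaBetaNorm α β φ) y (B y z) x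
        + gTensor (alphaBetaNorm α β φ) y (B z x) y
      = alphaBetaPhi φ (β y / √(α y y))
          * (α y (B y z) * (α y y * β x - α y x * β y)
            + α y (B x y) * (α y y * β z - α y z * β y)) / (α y y * √(α y y)) := by
  simp only [gTensor_alphaBetaNorm hα hφ hφ' hy _ _ rfl, hβ]
  rw [show α (B z x) y = -(α (B x y) z + α (B y z) x) by linear_combination hcyc x y z]
  have hsqrt : 0 < √(α y y) := Real.sqrt_pos.mpr hy
  have hy_sq : α y y = √(α y y) ^ 2 := (Real.sq_sqrt hy.le).symm
  set q := √(α y y)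
  rw [hy_sq]
  field_simp
  ring

theorem alphaBetaNorm_cyclicSum_eq_zero_iff (hα : ∀ u v, α u v = α v u)
    (hφ : Differentiable ℝ φ) (hφ' : Differentiable ℝ (deriv φ)) (B : V → V → V)
    (hcyc : ∀ x y z, α (B x y) z + α (B y z) x + α (B z x) y = 0)
    (hβ : ∀ u v, β (B u v) = 0) {y : V} (hy : 0 < α y y) :
    (∀ x z, gTensor (alphaBetaNorm α β φ) y (B x y) z
        + gTensor (alphaBetaNorm α β φ) y (B y z) x
        + gTensor (alphaBetaNorm α β φ) y (B z x) y = 0)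
      ↔ ∀ u v, alphaBetaPhi φ (β y / √(α y y))
          * (α y (B y u) * (α y y * β v - α y v * β y)
            + α y (B v y) * (α y y * β u - α y u * β y)) = 0 := by
  have hden : α y y * √(α y y) ≠ 0 := by positivity
  simp only [cyclicSum_gTensor_alphaBetaNorm hα hφ hφ' B hcyc hβ hy, div_eq_zero_iff, hden,
    or_false]
  exact ⟨fun H u v => H v u, fun H x z => H z x⟩

end FundamentalTensor

theorem cyclic_alpha_beta_Phi_Psi_criterion_general
    {g : Type*} [NormedAddCommGroup g] [NormedSpace ℝ g]
    (L : g →ₗ[ℝ] g →ₗ[ℝ] g)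
    (h m : Submodule ℝ g) (hcompl : IsCompl h m)
    (α : (↥m) →ₗ[ℝ] (↥m) →ₗ[ℝ] ℝ)
    (hαsymm : ∀ u v : m, α u v = α v u)
    (hαpos : ∀ u : m, u ≠ 0 → 0 < α u u)
    (X : m)
    (φ : ℝ → ℝ) (hφ : ContDiff ℝ (⊤ : ℕ∞) φ)
    (F : m → ℝ)
    (hFdef : ∀ y : m, F y = Real.sqrt (α y y) * φ (α X y / Real.sqrt (α y y)))
    -- `α` induces a cyclic Riemannian metric:
    (hαcyc : ∀ x y z : m,
      α (projTo h m hcompl (L (x : g) (y : g))) z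
        + α (projTo h m hcompl (L (y : g) (z : g))) x
        + α (projTo h m hcompl (L (z : g) (x : g))) y = 0)
    -- the Douglas condition:
    (hdouglas : ∀ u v : m, α X (projTo h m hcompl (L (u : g) (v : g))) = 0) :
    (∀ y : m, y ≠ 0 → ∀ x z : m,
        gTensor F y (projTo h m hcompl (L (x : g) (y : g))) z
          + gTensor F y (projTo h m hcompl (L (y : g) (z : g))) x
          + gTensor F y (projTo h m hcompl (L (z : g) (x : g))) y = 0)
      ↔ (∀ u v y : m, y ≠ 0 →
          (φ (α X y / Real.sqrt (α y y)) * deriv φ (α X y / Real.sqrt (α y y))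
              - (α X y / Real.sqrt (α y y)) * (deriv φ (α X y / Real.sqrt (α y y))) ^ 2
              - (α X y / Real.sqrt (α y y)) * φ (α X y / Real.sqrt (α y y))
                  * deriv (deriv φ) (α X y / Real.sqrt (α y y)))
            * (α y (projTo h m hcompl (L (y : g) (u : g)))
                  * (α y y * α X v - α y v * α X y)
                + α y (projTo h m hcompl (L (v : g) (y : g)))
                  * (α y y * α X u - α y u * α X y)) = 0) := by
  obtain rfl : F = alphaBetaNorm α (α X) φ := funext hFdef
  have hφ₂ : ContDiff ℝ 2 φ := hφ.of_le (WithTop.coe_le_coe.mpr le_top)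
  have key (y : m) (hy : y ≠ 0) :=
    alphaBetaNorm_cyclicSum_eq_zero_iff hαsymm (hφ₂.differentiable (by norm_num))
      hφ₂.differentiable_deriv_two (fun x y => projTo h m hcompl (L x y)) hαcyc hdouglas
      (hαpos y hy)
  exact ⟨fun H u v y hy => (key y hy).1 (H y hy) u v,
    fun H y hy => (key y hy).2 fun u v => H u v y hy⟩

/-- For a homogeneous Douglas `(α,β)`-metric `F = α·φ(β/α)` with `α`
cyclic, `F` is cyclic if and only if `Φ(r)·Ψ(u,v,y) = 0` for all `u,v ∈ m`, `y ∈ m∖{0}`,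
where `r = α(X,y)/√(α(y,y))`,
`Φ(r) = φ(r)φ'(r) − r·φ'(r)² − r·φ(r)·φ''(r)` and
`Ψ(u,v,y) = α(y,[y,u]_m)(α(y,y)α(X,v) − α(y,v)α(X,y))
          + α(y,[v,y]_m)(α(y,y)α(X,u) − α(y,u)α(X,y))`. -/
theorem cyclic_alpha_beta_Phi_Psi_criterion
    {g : Type*} [NormedAddCommGroup g] [NormedSpace ℝ g] [FiniteDimensional ℝ g]
    (L : g →ₗ[ℝ] g →ₗ[ℝ] g) (hL : IsLieBracket L)
    (h m : Submodule ℝ g) (hcompl : IsCompl h m)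
    (hsubalg : ∀ x ∈ h, ∀ y ∈ h, L x y ∈ h)
    (hreduct : ∀ x ∈ h, ∀ y ∈ m, L x y ∈ m)
    (α : (↥m) →ₗ[ℝ] (↥m) →ₗ[ℝ] ℝ)
    (hαsymm : ∀ u v : m, α u v = α v u)
    (hαpos : ∀ u : m, u ≠ 0 → 0 < α u u)
    (X : m) (hX : X ≠ 0)
    (φ : ℝ → ℝ) (hφ : ContDiff ℝ (⊤ : ℕ∞) φ) (hφpos : ∀ r : ℝ, 0 < φ r)
    (F : m → ℝ)
    (hFdef : ∀ y : m, F y = Real.sqrt (α y y) * φ (α X y / Real.sqrt (α y y)))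
    (hF : IsMinkowskiNorm F)
    -- `α` induces a cyclic Riemannian metric:
    (hαcyc : ∀ x y z : m,
      α (projTo h m hcompl (L (x : g) (y : g))) z
        + α (projTo h m hcompl (L (y : g) (z : g))) x
        + α (projTo h m hcompl (L (z : g) (x : g))) y = 0)
    -- the Douglas condition:
    (hdouglas : ∀ u v : m, α X (projTo h m hcompl (L (u : g) (v : g))) = 0) :
    (∀ y : m, y ≠ 0 → ∀ x z : m,
        gTensor F y (projTo h m hcompl (L (x : g) (y : g))) z
          + gTensor F y (projTo h m hcompl (L (y : g) (z : g))) x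
          + gTensor F y (projTo h m hcompl (L (z : g) (x : g))) y = 0)
      ↔ (∀ u v y : m, y ≠ 0 →
          (φ (α X y / Real.sqrt (α y y)) * deriv φ (α X y / Real.sqrt (α y y))
              - (α X y / Real.sqrt (α y y)) * (deriv φ (α X y / Real.sqrt (α y y))) ^ 2
              - (α X y / Real.sqrt (α y y)) * φ (α X y / Real.sqrt (α y y))
                  * deriv (deriv φ) (α X y / Real.sqrt (α y y)))
            * (α y (projTo h m hcompl (L (y : g) (u : g)))
                  * (α y y * α X v - α y v * α X y)
                + α y (projTo h m hcompl (L (v : g) (y : g)))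
                  * (α y y * α X u - α y u * α X y)) = 0) :=
  cyclic_alpha_beta_Phi_Psi_criterion_general L h m hcompl α hαsymm hαpos X φ hφ F hFdef hαcyc
    hdouglas

end
end

section
/- Let F be a cyclic Minkowski norm on a finite-dimensional real Lie algebra g with spray vector field η and connection operator N (with N differentiable in its first variable), and let R_y be the associated Riemann curvature. If y ∈ g∖{0} satisfies g_y([u,v],y) = 0 for all u,v ∈ g, then R_y(u) = −[y,[y,u]] for all u ∈ g, i.e. R_y = −ad(y)². -/
noncomputable section

/-! The hypothesis `g_y([g,g],y) = 0` forces the spray to vanish at `y`. This kills both the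
Cartan term of the connection and the term `D_η N`, and cyclicity then identifies `N(y,·)` with
`-ad y`, so `R_y` becomes a bracket computation using only antisymmetry. -/

theorem IsLieBracket.apply_swap {V : Type*} [AddCommGroup V] [Module ℝ V]
    {L : V →ₗ[ℝ] V →ₗ[ℝ] V} (hL : IsLieBracket L) (a b : V) : L a b = -L b a := by
  have h := hL.alternate (a + b)
  simp only [map_add, LinearMap.add_apply, hL.alternate a, hL.alternate b,
    zero_add, add_zero] at h
  exact eq_neg_of_add_eq_zero_right h

theorem IsLieBracket.riemannCurv_eq_neg_apply_apply {V : Type*} [NormedAddCommGroup V]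
    [NormedSpace ℝ V] {L : V →ₗ[ℝ] V →ₗ[ℝ] V} (hL : IsLieBracket L) {η : V → V}
    {N : V → V → V} {y : V} (hη : η y = 0) (hN : ∀ v, N y v = L v y) (u : V) :
    RiemannCurv L η N y u = -L y (L y u) := by
  simp only [RiemannCurv, hη, map_zero, hN, hL.apply_swap u y, map_neg, LinearMap.neg_apply,
    hL.apply_swap (L y u) y]
  abel

namespace IsMinkowskiNorm

variable {V : Type*} [NormedAddCommGroup V] [NormedSpace ℝ V] {F : V → ℝ} {y : V}

theorem gTensor_neg_left_s8 (hF : IsMinkowskiNorm F) (hy : y ≠ 0) (u v : V) :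
    gTensor F y (-u) v = -gTensor F y u v := by
  simpa [neg_one_smul] using hF.g_smul_left y hy (-1) u v

theorem gTensor_sub_left (hF : IsMinkowskiNorm F) (hy : y ≠ 0) (a b u : V) :
    gTensor F y (a - b) u = gTensor F y a u - gTensor F y b u := by
  rw [sub_eq_add_neg, hF.g_add_left y hy, hF.gTensor_neg_left_s8 hy]
  ring

theorem eq_zero_of_gTensor_left_eq_zero (hF : IsMinkowskiNorm F) (hy : y ≠ 0) {w : V}
    (hw : ∀ u, gTensor F y w u = 0) : w = 0 := by
  by_contra h
  exact (hF.g_posdef y hy w h).ne' (hw w)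

end IsMinkowskiNorm

theorem cartanTensor_zero_right {V : Type*} [NormedAddCommGroup V] [NormedSpace ℝ V]
    (F : V → ℝ) (y u v : V) : cartanTensor F y u v 0 = 0 := by
  simp [cartanTensor]

section
variable {V : Type*} [NormedAddCommGroup V] [NormedSpace ℝ V] {L : V →ₗ[ℝ] V →ₗ[ℝ] V}
  {F : V → ℝ} {y : V}

theorem IsMinkowskiNorm.spray_eq_zero (hF : IsMinkowskiNorm F) (hy : y ≠ 0) {η : V → V}
    (hη : ∀ u, gTensor F y (η y) u = gTensor F y y (L u y))
    (h0 : ∀ u v, gTensor F y (L u v) y = 0) : η y = 0 :=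
  hF.eq_zero_of_gTensor_left_eq_zero hy fun u => by rw [hη, hF.g_symm y hy, h0]

theorem IsCyclicNorm.connection_eq_apply (hcyc : IsCyclicNorm L F) (hL : IsLieBracket L)
    (hF : IsMinkowskiNorm F) (hy : y ≠ 0) {η : V → V} {N : V → V → V} (hη : η y = 0)
    (hN : ∀ u v, 2 * gTensor F y (N y v) u =
      gTensor F y (L u v) y + gTensor F y (L u y) v + gTensor F y (L v y) u
        - 2 * cartanTensor F y u v (η y))
    (h0 : ∀ u v, gTensor F y (L u v) y = 0) (v : V) : N y v = L v y := by
  refine sub_eq_zero.mp (hF.eq_zero_of_gTensor_left_eq_zero hy fun u => ?_)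
  have hNu := hN u v
  rw [hη, cartanTensor_zero_right, h0] at hNu
  -- cyclicity turns `g_y([u,y],v)` into `g_y([v,y],u)`
  have hcyc_u := hcyc y hy u v
  have hswap : gTensor F y (L y v) u = -gTensor F y (L v y) u := by
    rw [hL.apply_swap y v, hF.gTensor_neg_left_s8 hy]
  rw [hF.gTensor_sub_left hy]
  linarith [h0 v u]

end

theorem cyclic_riemann_curvature_eq_neg_ad_sq_general
    {g : Type*} [NormedAddCommGroup g] [NormedSpace ℝ g]
    (L : g →ₗ[ℝ] g →ₗ[ℝ] g) (hL : IsLieBracket L)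
    (F : g → ℝ) (hF : IsMinkowskiNorm F) (hcyc : IsCyclicNorm L F)
    (η : g → g) (N : g → g → g)
    (hη : ∀ y : g, y ≠ 0 → ∀ u : g, gTensor F y (η y) u = gTensor F y y (L u y))
    (hN : ∀ y : g, y ≠ 0 → ∀ u v : g,
      2 * gTensor F y (N y v) u =
        gTensor F y (L u v) y + gTensor F y (L u y) v + gTensor F y (L v y) u
          - 2 * cartanTensor F y u v (η y))
    (y : g) (hy : y ≠ 0)
    (h0 : ∀ u v : g, gTensor F y (L u v) y = 0) :
    ∀ u : g, RiemannCurv L η N y u = -(L y (L y u)) := by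
  have hηy : η y = 0 := hF.spray_eq_zero hy (hη y hy) h0
  exact hL.riemannCurv_eq_neg_apply_apply hηy
    (hcyc.connection_eq_apply hL hF hy hηy (hN y hy) h0)

/-- For a cyclic Minkowski norm, if `g_y([g,g],y) = 0` then the
Riemann curvature satisfies `R_y = −ad(y)²`, i.e. `R_y(u) = −[y,[y,u]]`. -/
theorem cyclic_riemann_curvature_eq_neg_ad_sq
    {g : Type*} [NormedAddCommGroup g] [NormedSpace ℝ g] [FiniteDimensional ℝ g]
    (L : g →ₗ[ℝ] g →ₗ[ℝ] g) (hL : IsLieBracket L)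
    (F : g → ℝ) (hF : IsMinkowskiNorm F) (hcyc : IsCyclicNorm L F)
    (η : g → g) (N : g → g → g)
    (hη : ∀ y : g, y ≠ 0 → ∀ u : g, gTensor F y (η y) u = gTensor F y y (L u y))
    (hN : ∀ y : g, y ≠ 0 → ∀ u v : g,
      2 * gTensor F y (N y v) u =
        gTensor F y (L u v) y + gTensor F y (L u y) v + gTensor F y (L v y) u
          - 2 * cartanTensor F y u v (η y))
    (hNdiff : ∀ u : g, DifferentiableOn ℝ (fun z => N z u) {(0 : g)}ᶜ)
    (y : g) (hy : y ≠ 0)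
    (h0 : ∀ u v : g, gTensor F y (L u v) y = 0) :
    ∀ u : g, RiemannCurv L η N y u = -(L y (L y u)) :=
  cyclic_riemann_curvature_eq_neg_ad_sq_general L hL F hF hcyc η N hη hN y hy h0

end
end

section
/- Let F be a cyclic Minkowski norm on a finite-dimensional real Lie algebra g with spray vector field η, connection operator N (with N differentiable in its first variable), and associated Riemann curvature R_y. Then every y in the center of g with y ≠ 0 satisfies g_y([u,v],y) = 0 for all u,v ∈ g, and consequently R_y(u) = 0 for all u ∈ g. -/
/-! At a central `y` every bracket with `y` vanishes, so the cyclic identity with `y` in the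
middle slot collapses to `g_y([u,v],y) = 0`. Then the right-hand sides defining `η(y)` and
`N(y,·)` vanish (the Cartan term because `η(y) = 0`), positive definiteness of `g_y` forces
`η(y) = 0` and `N(y,·) = 0`, and every term of `R_y` is zero; the derivative term because it is
evaluated on `η(y) = 0`. -/

noncomputable section

namespace IsLieBracket

variable {V : Type*} [AddCommGroup V] [Module ℝ V] {L : V →ₗ[ℝ] V →ₗ[ℝ] V}

theorem apply_swap_s9 (hL : IsLieBracket L) (x y : V) : L x y = -L y x := by
  have h := hL.alternate (x + y)
  simp only [map_add, LinearMap.add_apply, hL.alternate, zero_add, add_zero] at h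
  exact eq_neg_of_add_eq_zero_right h

theorem apply_central_right (hL : IsLieBracket L) {y : V} (hy : ∀ v, L y v = 0) (x : V) :
    L x y = 0 := by
  rw [hL.apply_swap_s9, hy, neg_zero]

end IsLieBracket

section Tensors

variable {V : Type*} [NormedAddCommGroup V] [NormedSpace ℝ V] {F : V → ℝ}

theorem gTensor_zero_right (F : V → ℝ) (y u : V) : gTensor F y u 0 = 0 := by
  simp [gTensor]

theorem cartanTensor_zero (F : V → ℝ) (y u v : V) : cartanTensor F y u v 0 = 0 := by
  simp [cartanTensor]

theorem IsMinkowskiNorm.gTensor_zero_left (hF : IsMinkowskiNorm F) {y : V} (hy : y ≠ 0)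
    (v : V) : gTensor F y 0 v = 0 := by
  simpa using hF.g_smul_left y hy 0 0 v

theorem IsMinkowskiNorm.eq_zero_of_gTensor_self (hF : IsMinkowskiNorm F) {y w : V}
    (hy : y ≠ 0) (hw : gTensor F y w w = 0) : w = 0 := by
  by_contra hne
  exact (hF.g_posdef y hy w hne).ne' hw

end Tensors

section Central

variable {V : Type*} [NormedAddCommGroup V] [NormedSpace ℝ V]
  {L : V →ₗ[ℝ] V →ₗ[ℝ] V} {F : V → ℝ} {y : V}

theorem IsCyclicNorm.gTensor_bracket_central (hcyc : IsCyclicNorm L F) (hL : IsLieBracket L)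
    (hF : IsMinkowskiNorm F) (hy0 : y ≠ 0) (hy : ∀ v, L y v = 0) (u v : V) :
    gTensor F y (L u v) y = 0 := by
  have h := hcyc y hy0 v u
  rwa [hL.apply_central_right hy, hy, hF.gTensor_zero_left hy0, hF.gTensor_zero_left hy0,
    zero_add, zero_add] at h

theorem spray_eq_zero_of_central (hL : IsLieBracket L) (hF : IsMinkowskiNorm F) {η : V → V}
    (hη : ∀ u, gTensor F y (η y) u = gTensor F y y (L u y)) (hy0 : y ≠ 0)
    (hy : ∀ v, L y v = 0) : η y = 0 := by
  refine hF.eq_zero_of_gTensor_self hy0 ?_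
  rw [hη, hL.apply_central_right hy, gTensor_zero_right]

theorem connection_eq_zero_of_central (hcyc : IsCyclicNorm L F) (hL : IsLieBracket L)
    (hF : IsMinkowskiNorm F) {η : V → V} {N : V → V → V} (hηy : η y = 0)
    (hN : ∀ u v, 2 * gTensor F y (N y v) u =
      gTensor F y (L u v) y + gTensor F y (L u y) v + gTensor F y (L v y) u
        - 2 * cartanTensor F y u v (η y))
    (hy0 : y ≠ 0) (hy : ∀ v, L y v = 0) (v : V) : N y v = 0 := by
  refine hF.eq_zero_of_gTensor_self hy0 ?_
  have h := hN (N y v) v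
  rw [hcyc.gTensor_bracket_central hL hF hy0 hy, hL.apply_central_right hy,
    hL.apply_central_right hy, hF.gTensor_zero_left hy0, hF.gTensor_zero_left hy0, hηy,
    cartanTensor_zero] at h
  linarith

end Central

theorem riemannCurv_eq_zero_of_spray_connection_eq_zero {V : Type*} [NormedAddCommGroup V]
    [NormedSpace ℝ V] (L : V →ₗ[ℝ] V →ₗ[ℝ] V) {η : V → V} {N : V → V → V} {y : V}
    (hηy : η y = 0) (hNy : ∀ v, N y v = 0) (u : V) : RiemannCurv L η N y u = 0 := by
  simp only [RiemannCurv, hηy, hNy, map_zero, sub_zero, add_zero]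

theorem cyclic_center_flat_general
    {g : Type*} [NormedAddCommGroup g] [NormedSpace ℝ g]
    (L : g →ₗ[ℝ] g →ₗ[ℝ] g) (hL : IsLieBracket L)
    (F : g → ℝ) (hF : IsMinkowskiNorm F) (hcyc : IsCyclicNorm L F)
    (η : g → g) (N : g → g → g)
    (hη : ∀ y : g, y ≠ 0 → ∀ u : g, gTensor F y (η y) u = gTensor F y y (L u y))
    (hN : ∀ y : g, y ≠ 0 → ∀ u v : g,
      2 * gTensor F y (N y v) u =
        gTensor F y (L u v) y + gTensor F y (L u y) v + gTensor F y (L v y) u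
          - 2 * cartanTensor F y u v (η y)) :
    ∀ y : g, y ≠ 0 → (∀ v : g, L y v = 0) →
      (∀ u v : g, gTensor F y (L u v) y = 0) ∧ (∀ u : g, RiemannCurv L η N y u = 0) := by
  intro y hy0 hy
  have hηy : η y = 0 := spray_eq_zero_of_central hL hF (hη y hy0) hy0 hy
  have hNy : ∀ v, N y v = 0 :=
    connection_eq_zero_of_central hcyc hL hF hηy (hN y hy0) hy0 hy
  exact ⟨hcyc.gTensor_bracket_central hL hF hy0 hy,
    riemannCurv_eq_zero_of_spray_connection_eq_zero L hηy hNy⟩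

/-- For a cyclic Minkowski norm on `g`, every nonzero `y` in the center
of `g` satisfies `g_y([u,v],y) = 0` for all `u,v`, and consequently `R_y ≡ 0`. -/
theorem cyclic_center_flat
    {g : Type*} [NormedAddCommGroup g] [NormedSpace ℝ g] [FiniteDimensional ℝ g]
    (L : g →ₗ[ℝ] g →ₗ[ℝ] g) (hL : IsLieBracket L)
    (F : g → ℝ) (hF : IsMinkowskiNorm F) (hcyc : IsCyclicNorm L F)
    (η : g → g) (N : g → g → g)
    (hη : ∀ y : g, y ≠ 0 → ∀ u : g, gTensor F y (η y) u = gTensor F y y (L u y))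
    (hN : ∀ y : g, y ≠ 0 → ∀ u v : g,
      2 * gTensor F y (N y v) u =
        gTensor F y (L u v) y + gTensor F y (L u y) v + gTensor F y (L v y) u
          - 2 * cartanTensor F y u v (η y))
    (hNdiff : ∀ u : g, DifferentiableOn ℝ (fun z => N z u) {(0 : g)}ᶜ) :
    ∀ y : g, y ≠ 0 → (∀ v : g, L y v = 0) →
      (∀ u v : g, gTensor F y (L u v) y = 0) ∧ (∀ u : g, RiemannCurv L η N y u = 0) :=
  cyclic_center_flat_general L hL F hF hcyc η N hη hN

end
end

section
/- Let F be a Minkowski norm on a finite-dimensional real vector space V and let W be a proper linear subspace of V. Then there exists y ∈ V∖W with g_y(w,y) = 0 for all w ∈ W. -/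
noncomputable section

/-! Pick `v ∉ W` and minimize `F` over the affine subspace `v + W`, which avoids `0`.
Homogeneity and compactness of the unit sphere make `F` coercive, so a minimizer `y` exists,
and `y ∉ W`. For `w ∈ W` the function `s ↦ F(y + s • w)²` is minimal at `0`, while Euler's
relation for the degree-two homogeneous `F²` identifies its derivative there with
`2 g_y(w, y)`. -/

open Filter Topology

section Homogeneous

variable {V : Type*} [NormedAddCommGroup V] [NormedSpace ℝ V] {F : V → ℝ}

lemma sq_apply_add_smul_add_smul_self
    (hhom : ∀ c : ℝ, 0 < c → ∀ x : V, F (c • x) = c * F x) (y w : V) (s : ℝ) {t : ℝ} (ht : 0 < 1 + t) :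
    F (y + s • w + t • y) ^ 2 = (1 + t) ^ 2 * F (y + (s / (1 + t)) • w) ^ 2 := by
  have hline : y + s • w + t • y = (1 + t) • (y + (s / (1 + t)) • w) := by
    rw [smul_add, smul_smul, mul_div_cancel₀ _ ht.ne']
    module
  rw [hline, hhom _ ht, mul_pow]

lemma hasDerivAt_sq_apply_add_smul_add_smul_self
    (hhom : ∀ c : ℝ, 0 < c → ∀ x : V, F (c • x) = c * F x) {y w : V} {s : ℝ}
    (hφ : DifferentiableAt ℝ (fun r : ℝ => F (y + r • w) ^ 2) s) :
    HasDerivAt (fun t : ℝ => F (y + s • w + t • y) ^ 2)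
      (2 * F (y + s • w) ^ 2 - s * deriv (fun r : ℝ => F (y + r • w) ^ 2) s) 0 := by
  set φ : ℝ → ℝ := fun r => F (y + r • w) ^ 2
  have hsq : HasDerivAt (fun t : ℝ => (1 + t) ^ 2) 2 0 := by
    simpa using ((hasDerivAt_id (0 : ℝ)).const_add 1).fun_pow 2
  have hquot : HasDerivAt (fun t : ℝ => s / (1 + t)) (-s) 0 := by
    simpa using (hasDerivAt_const (0 : ℝ) s).fun_div ((hasDerivAt_id (0 : ℝ)).const_add 1)
      (by norm_num)
  have hcomp : HasDerivAt (fun t : ℝ => φ (s / (1 + t))) (deriv φ s * -s) 0 := by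
    have hφ' : HasDerivAt φ (deriv φ s) (s / (1 + 0)) := by simpa using hφ.hasDerivAt
    exact hφ'.comp 0 hquot
  have heq : (fun t : ℝ => F (y + s • w + t • y) ^ 2) =ᶠ[𝓝 0]
      fun t => (1 + t) ^ 2 * φ (s / (1 + t)) := by
    filter_upwards [eventually_gt_nhds (show (-1 : ℝ) < 0 by norm_num)] with t ht
    exact sq_apply_add_smul_add_smul_self hhom y w s (by linarith)
  refine ((hsq.fun_mul hcomp).congr_of_eventuallyEq heq).congr_deriv ?_
  simp only [add_zero, div_one, one_pow, φ]
  ring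

lemma contDiffAt_sq_apply_add_smul {n : WithTop ℕ∞} {y w : V} {s : ℝ}
    (hF : ContDiffAt ℝ n F (y + s • w)) :
    ContDiffAt ℝ n (fun r : ℝ => F (y + r • w) ^ 2) s :=
  (hF.comp s (contDiffAt_const.add (contDiffAt_id.smul contDiffAt_const))).pow 2

-- Euler's relation for the degree-two homogeneous function `F²`.
lemma gTensor_apply_self_right (hhom : ∀ c : ℝ, 0 < c → ∀ x : V, F (c • x) = c * F x)
    {y : V} (hF : ContDiffAt ℝ 2 F y) (w : V) :
    gTensor F y w y = 1 / 2 * deriv (fun s : ℝ => F (y + s • w) ^ 2) 0 := by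
  set φ : ℝ → ℝ := fun s => F (y + s • w) ^ 2
  have hφ : ContDiffAt ℝ 2 φ 0 := contDiffAt_sq_apply_add_smul (by simpa using hF)
  have hφ_near : ∀ᶠ s in 𝓝 0, DifferentiableAt ℝ φ s :=
    (hφ.eventually (by simp)).mono fun s hs => hs.differentiableAt (by simp)
  have hφ' : DifferentiableAt ℝ (deriv φ) 0 :=
    ((hφ.fderiv_right (m := 1) le_rfl).clm_apply contDiffAt_const).differentiableAt (by simp)
  have hinner : (fun s : ℝ => deriv (fun t : ℝ => F (y + s • w + t • y) ^ 2) 0) =ᶠ[𝓝 0]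
      fun s => 2 * φ s - s * deriv φ s := by
    filter_upwards [hφ_near] with s hs
    exact (hasDerivAt_sq_apply_add_smul_add_smul_self hhom hs).deriv
  have houter : HasDerivAt (fun s => 2 * φ s - s * deriv φ s) (deriv φ 0) 0 := by
    refine ((hφ_near.self_of_nhds.hasDerivAt.const_mul 2).fun_sub
      ((hasDerivAt_id 0).fun_mul hφ'.hasDerivAt)).congr_deriv ?_
    ring
  rw [gTensor, hinner.deriv_eq, houter.deriv]

end Homogeneous

section Coercive

variable {V : Type*} [NormedAddCommGroup V] [NormedSpace ℝ V] [FiniteDimensional ℝ V]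
  {F : V → ℝ}

lemma exists_pos_mul_norm_le (hhom : ∀ c : ℝ, 0 < c → ∀ x : V, F (c • x) = c * F x)
    (hpos : ∀ x : V, x ≠ 0 → 0 < F x) (hcont : ContinuousOn F {0}ᶜ) :
    ∃ c > 0, ∀ x : V, x ≠ 0 → c * ‖x‖ ≤ F x := by
  rcases subsingleton_or_nontrivial V with hV | hV
  · exact ⟨1, one_pos, fun x hx => absurd (Subsingleton.elim x 0) hx⟩
  have hsphere : Metric.sphere (0 : V) 1 ⊆ {0}ᶜ := fun x hx h => by simp_all
  obtain ⟨z, hz, hzmin⟩ := (isCompact_sphere (0 : V) 1).exists_isMinOn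
    (NormedSpace.sphere_nonempty.2 zero_le_one) (hcont.mono hsphere)
  refine ⟨F z, hpos z (hsphere hz), fun x hx => ?_⟩
  have hnorm : 0 < ‖x‖ := norm_pos_iff.2 hx
  have hunit : ‖x‖⁻¹ • x ∈ Metric.sphere (0 : V) 1 := by
    simp [norm_smul, hnorm.ne']
  calc F z * ‖x‖ ≤ F (‖x‖⁻¹ • x) * ‖x‖ := by gcongr; exact hzmin hunit
    _ = F x := by
      rw [hhom _ (inv_pos.2 hnorm), mul_right_comm, inv_mul_cancel₀ hnorm.ne', one_mul]

lemma exists_isMinOn_of_isClosed (hhom : ∀ c : ℝ, 0 < c → ∀ x : V, F (c • x) = c * F x)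
    (hpos : ∀ x : V, x ≠ 0 → 0 < F x) (hcont : ContinuousOn F {0}ᶜ) {S : Set V}
    (hS : IsClosed S) (hS_ne : S.Nonempty) (hS0 : (0 : V) ∉ S) :
    ∃ y ∈ S, IsMinOn F S y := by
  obtain ⟨c, hc, hcoer⟩ := exists_pos_mul_norm_le hhom hpos hcont
  obtain ⟨v, hv⟩ := hS_ne
  have hS_sub : S ⊆ {0}ᶜ := fun x hx h => hS0 (h ▸ hx)
  refine (hcont.mono hS_sub).exists_isMinOn' hS hv ?_
  rw [eventually_inf_principal]
  filter_upwards [tendsto_norm_cocompact_atTop.eventually (eventually_ge_atTop (F v / c))]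
    with x hx hxS
  calc F v = c * (F v / c) := by field_simp
    _ ≤ c * ‖x‖ := by gcongr
    _ ≤ F x := hcoer x (hS_sub hxS)

end Coercive

/-- For a Minkowski norm `F` on `V` and a proper subspace `W ⊊ V`,
there is `y ∉ W` with `g_y(w,y) = 0` for all `w ∈ W`. -/
theorem exists_gTensor_orthogonal_of_proper_subspace
    {V : Type*} [NormedAddCommGroup V] [NormedSpace ℝ V] [FiniteDimensional ℝ V]
    (F : V → ℝ) (hF : IsMinkowskiNorm F)
    (W : Submodule ℝ V) (hW : W ≠ ⊤) :
    ∃ y : V, y ∉ W ∧ ∀ w ∈ W, gTensor F y w y = 0 := by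
  obtain ⟨v, hv⟩ : ∃ v, v ∉ W := by simpa [Submodule.eq_top_iff'] using hW
  set S := AffineSubspace.mk' v W
  have hS0 : (0 : V) ∉ S := fun h => hv (by simpa using AffineSubspace.mem_mk'.1 h)
  obtain ⟨y, hyS, hymin⟩ := exists_isMinOn_of_isClosed hF.homog hF.pos
    hF.smooth.continuousOn S.closed_of_finiteDimensional ⟨v, AffineSubspace.self_mem_mk' v W⟩
    hS0
  refine ⟨y, fun hy => hv ?_, fun w hw => ?_⟩
  · simpa using sub_mem hy (AffineSubspace.mem_mk'.1 hyS)
  have hy0 : y ≠ 0 := fun h => hS0 (h ▸ hyS)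
  have hmin : IsLocalMin (fun s : ℝ => F (y + s • w) ^ 2) 0 := by
    refine Eventually.of_forall fun s => ?_
    have hys : y + s • w ∈ S := by
      rw [add_comm, ← vadd_eq_add]
      exact S.vadd_mem_of_mem_direction (by simpa [S] using W.smul_mem s hw) hyS
    simpa using pow_le_pow_left₀ (hF.pos y hy0).le (hymin hys) 2
  have hF2 : ContDiffAt ℝ 2 F y :=
    (hF.smooth.contDiffAt (isOpen_compl_singleton.mem_nhds hy0)).of_le
      (WithTop.coe_le_coe.2 le_top)
  rw [gTensor_apply_self_right hF.homog hF2 w, hmin.deriv_eq_zero, mul_zero]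

end
end

section
/- Let φ be a smooth positive real-valued function on an interval I ⊆ ℝ satisfying φ(r)·φ'(r) − r·φ'(r)² − r·φ(r)·φ''(r) = 0 for all r ∈ I. Then there exist constants c₁ and c₂ such that φ(r)² = c₁·r² + c₂ for all r ∈ I. -/
/-- If a smooth positive function `φ` on an interval `I` satisfies
`φφ' − r(φ')² − rφφ'' = 0` on `I`, then `φ(r)² = c₁r² + c₂` on `I` for some constants. -/
theorem ode_phi_sq_eq_quadratic
    (φ : ℝ → ℝ) (I : Set ℝ) (hI : I.OrdConnected)
    (hφ : ContDiffOn ℝ (⊤ : ℕ∞) φ I)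
    (hφpos : ∀ r ∈ I, 0 < φ r)
    (hODE : ∀ r ∈ I,
      φ r * derivWithin φ I r - r * (derivWithin φ I r) ^ 2
        - r * φ r * derivWithin (derivWithin φ I) I r = 0) :
    ∃ c₁ c₂ : ℝ, ∀ r ∈ I, (φ r) ^ 2 = c₁ * r ^ 2 + c₂ := by
  have hle1 : (1 : WithTop ℕ∞) ≤ ((⊤ : ℕ∞) : WithTop ℕ∞) := by exact_mod_cast le_top
  have hleS : ((⊤ : ℕ∞) : WithTop ℕ∞) + 1 ≤ ((⊤ : ℕ∞) : WithTop ℕ∞) := by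
    exact_mod_cast le_top
  -- convexity of `I`
  have hconv : Convex ℝ I := convex_iff_ordConnected.mpr hI
  -- degenerate case: `I` has at most one point
  by_cases hsub : ∀ x ∈ I, ∀ y ∈ I, x = y
  · rcases Set.eq_empty_or_nonempty I with hE | ⟨r₀, hr₀⟩
    · exact ⟨0, 0, fun r hr => by simp [hE] at hr⟩
    · refine ⟨0, φ r₀ ^ 2, fun r hr => ?_⟩
      rw [hsub r hr r₀ hr₀]; ring
  push_neg at hsub
  obtain ⟨a, ha, b, hb, hab⟩ := hsub
  -- `I` has nonempty interior, hence is uniquely differentiable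
  have hne : (interior I).Nonempty := by
    rcases lt_or_gt_of_ne hab with h | h
    · exact ⟨(a + b) / 2, interior_mono (hI.out ha hb) (by
        rw [interior_Icc]; constructor <;> linarith)⟩
    · exact ⟨(a + b) / 2, interior_mono (hI.out hb ha) (by
        rw [interior_Icc]; constructor <;> linarith)⟩
  have hUD : UniqueDiffOn ℝ I := uniqueDiffOn_convex hconv hne
  set φ' := derivWithin φ I with hφ'def
  set φ'' := derivWithin φ' I with hφ''def
  have hφd : DifferentiableOn ℝ φ I := hφ.differentiableOn (by simp)
  have hφ'c : ContDiffOn ℝ (⊤ : ℕ∞) φ' I := hφ.derivWithin hUD hleS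
  have hφ'd : DifferentiableOn ℝ φ' I := hφ'c.differentiableOn (by simp)
  have hφ''c : ContDiffOn ℝ (⊤ : ℕ∞) φ'' I := hφ'c.derivWithin hUD hleS
  have hφ''d : DifferentiableOn ℝ φ'' I := hφ''c.differentiableOn (by simp)
  -- `h = φ φ'`
  set h : ℝ → ℝ := fun r => φ r * φ' r with hhdef
  have hhc : ContDiffOn ℝ (⊤ : ℕ∞) h I := hφ.mul hφ'c
  have hhd : DifferentiableOn ℝ h I := hφd.mul hφ'd
  set h' := derivWithin h I with hh'def
  have hh'c : ContDiffOn ℝ (⊤ : ℕ∞) h' I := hhc.derivWithin hUD hleS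
  have hh' : ∀ r ∈ I, h' r = φ' r * φ' r + φ r * φ'' r := by
    intro r hr
    have := ((hφd r hr).hasDerivWithinAt.mul (hφ'd r hr).hasDerivWithinAt).derivWithin
      (hUD r hr)
    exact this
  have hh'd : DifferentiableOn ℝ h' I := hh'c.differentiableOn (by simp)
  set h'' := derivWithin h' I with hh''def
  have hh''c : ContDiffOn ℝ (⊤ : ℕ∞) h'' I := hh'c.derivWithin hUD hleS
  -- key identity: h r = r * h' r on I
  have key : ∀ r ∈ I, h r = r * h' r := by
    intro r hr
    have := hODE r hr
    rw [hh' r hr]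
    simp only [hhdef, ← hφ'def, ← hφ''def]
    nlinarith [this]
  -- differentiate the identity : r * h'' r = 0 on I
  have key2 : ∀ r ∈ I, r * h'' r = 0 := by
    intro r hr
    have hg0 : derivWithin (fun r => h r - r * h' r) I r = 0 := by
      have heq : derivWithin (fun r => h r - r * h' r) I r
          = derivWithin (fun _ => (0 : ℝ)) I r :=
        derivWithin_congr (fun y hy => by simp [key y hy]) (by simp [key r hr])
      rw [heq]; simp
    have hg : HasDerivWithinAt (fun r => h r - r * h' r)
        (h' r - (1 * h' r + r * h'' r)) I r :=
      (hhd r hr).hasDerivWithinAt.sub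
        ((hasDerivWithinAt_id r I).mul (hh'd r hr).hasDerivWithinAt)
    have := hg.derivWithin (hUD r hr)
    rw [hg0] at this
    linarith [this]
  -- hence h'' = 0 on I (continuity handles r = 0)
  have hzero : ∀ r ∈ I, h'' r = 0 := by
    intro r hr
    rcases eq_or_ne r 0 with rfl | hr0
    · -- continuity argument at 0
      obtain ⟨c, hc, hc0⟩ : ∃ c, c ∈ I ∧ c ≠ 0 := by
        rcases eq_or_ne a 0 with rfl | ha0
        · exact ⟨b, hb, fun hb0 => hab hb0.symm⟩
        · exact ⟨a, ha, ha0⟩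
      -- sequence c/(n+1) ∈ I tending to 0
      set t : ℕ → ℝ := fun n => c / (n + 1) with htdef
      have hn1 : ∀ n : ℕ, (0:ℝ) < n + 1 := fun n => by positivity
      have hn2 : ∀ n : ℕ, (1:ℝ) ≤ n + 1 := fun n => by
        have := Nat.cast_nonneg (α := ℝ) n; linarith
      have htI : ∀ n, t n ∈ I := by
        intro n
        rcases lt_or_gt_of_ne hc0 with hcneg | hcpos
        · refine hI.out hc hr ⟨?_, ?_⟩
          · rw [le_div_iff₀ (hn1 n)]; nlinarith [hn2 n]
          · exact div_nonpos_of_nonpos_of_nonneg hcneg.le (hn1 n).le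
        · refine hI.out hr hc ⟨?_, ?_⟩
          · positivity
          · rw [div_le_iff₀ (hn1 n)]; nlinarith [hn2 n]
      have htne : ∀ n, t n ≠ 0 := fun n =>
        div_ne_zero hc0 (ne_of_gt (hn1 n))
      have htlim : Filter.Tendsto t Filter.atTop (nhds 0) := by
        have := (tendsto_const_div_atTop_nhds_zero_nat c).comp
          (Filter.tendsto_add_atTop_nat 1)
        have heq : ((fun n : ℕ => c / n) ∘ fun n => n + 1) = t := by
          funext n; simp only [Function.comp_apply, htdef]; norm_cast
        rwa [heq] at this
      have hcont : ContinuousWithinAt h'' I 0 := hh''c.continuousOn 0 hr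
      have htlim' : Filter.Tendsto t Filter.atTop (nhdsWithin 0 I) := by
        rw [tendsto_nhdsWithin_iff]
        exact ⟨htlim, Filter.Eventually.of_forall htI⟩
      have hcomp : Filter.Tendsto (h'' ∘ t) Filter.atTop (nhds (h'' 0)) :=
        hcont.tendsto.comp htlim'
      have hval : ∀ n, (h'' ∘ t) n = 0 := by
        intro n
        rcases mul_eq_zero.mp (key2 (t n) (htI n)) with h0 | h0
        · exact absurd h0 (htne n)
        · exact h0
      rw [show h'' ∘ t = fun _ => (0:ℝ) from funext hval] at hcomp
      exact (tendsto_const_nhds_iff.mp hcomp).symm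
    · rcases mul_eq_zero.mp (key2 r hr) with h0 | h0
      · exact absurd h0 hr0
      · exact h0
  -- hence h' is constant on I
  have hconst : ∀ r ∈ I, h' r = h' a := by
    intro r hr
    have hfz : ∀ x ∈ I, fderivWithin ℝ h' I x = 0 := by
      intro x hx
      have hder : HasDerivWithinAt h' 0 I x := by
        have := (hh'd x hx).hasDerivWithinAt
        rwa [← hh''def, hzero x hx] at this
      have := hder.hasFDerivWithinAt.fderivWithin (hUD x hx)
      rw [this]
      ext y
      simp
    exact hconv.is_const_of_fderivWithin_eq_zero hh'd hfz hr ha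
  -- so h r = (h' a) * r, and φ² - (h' a) r² has zero derivative
  refine ⟨h' a, φ a ^ 2 - h' a * a ^ 2, fun r hr => ?_⟩
  have hdiff2 : DifferentiableOn ℝ (fun x => φ x ^ 2 - h' a * x ^ 2) I :=
    (hφd.pow 2).sub ((differentiableOn_id.pow 2).const_mul _)
  have hfz2 : ∀ y ∈ I, fderivWithin ℝ (fun x => φ x ^ 2 - h' a * x ^ 2) I y = 0 := by
    intro y hy
    have hder : HasDerivWithinAt (fun x => φ x ^ 2 - h' a * x ^ 2) 0 I y := by
      have h0 := ((hφd y hy).hasDerivWithinAt.pow 2).sub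
        (((hasDerivWithinAt_id y I).pow 2).const_mul (h' a))
      have h1 : h y = y * h' y := key y hy
      have h2 : h' y = h' a := hconst y hy
      have h3 : φ y * φ' y = y * h' a := by rw [← h2, ← h1]
      refine h0.congr_deriv ?_
      norm_num
      nlinarith [h3, show φ y * derivWithin φ I y = y * h' a from h3]
    have := hder.hasFDerivWithinAt.fderivWithin (hUD y hy)
    rw [this]
    ext z
    simp
  have hmain : (fun x => φ x ^ 2 - h' a * x ^ 2) r = (fun x => φ x ^ 2 - h' a * x ^ 2) a :=
    hconv.is_const_of_fderivWithin_eq_zero hdiff2 hfz2 hr ha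
  simp only at hmain
  linarith [hmain]
end

section
/- Let g be an n-dimensional real Lie algebra with a basis e₁,…,eₙ such that span{e₁,…,e_i} is an ideal of g for every 1 ≤ i ≤ n, let α be the inner product on g making e₁,…,eₙ orthonormal, and write [e_i,e_j] = Σ_k c_{ij}^k e_k for the structure constants. Then α is cyclic, i.e. α([x,y],z) + α([y,z],x) + α([z,x],y) = 0 for all x,y,z ∈ g, if and only if c_{ik}^j = c_{jk}^i for all 1 ≤ i < j < k ≤ n. -/
/-!
The cyclic sum is trilinear, so it vanishes iff it vanishes on basis triples, where it equals
`c_{ij}^k + c_{jk}^i + c_{ki}^j`. The flag of ideals forces `c_{ij}^k = 0` whenever `i < k` or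
`j < k`. For `i < j < k` this leaves `c_{jk}^i` as the only term of the cyclic sum at `(i, j, k)`
and makes `c_{ik}^j` vanish, so both sides of the equivalence say that `c_{jk}^i = 0` for
`i < j < k`. By antisymmetry this kills every structure constant with three distinct indices,
and then every cyclic sum of structure constants vanishes.
-/

noncomputable section

theorem basisInner_eq_toDual {V ι : Type*} [AddCommGroup V] [Module ℝ V] [Fintype ι]
    [DecidableEq ι] (e : Module.Basis ι ℝ V) (x y : V) :
    basisInner e x y = e.toDual x y := by
  conv_rhs => rw [← e.sum_repr x]
  simp only [map_sum, map_smul, LinearMap.sum_apply, LinearMap.smul_apply,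
    Module.Basis.toDual_apply_right, smul_eq_mul, basisInner]

namespace LinearMap

variable {R M N P Q : Type*} [CommRing R] [AddCommGroup M] [Module R M]
  [AddCommGroup N] [Module R N] [AddCommGroup P] [Module R P] [AddCommGroup Q] [Module R Q]

def rotate (T : M →ₗ[R] N →ₗ[R] P →ₗ[R] Q) : P →ₗ[R] M →ₗ[R] N →ₗ[R] Q :=
  ((lflip : (N →ₗ[R] P →ₗ[R] Q) ≃ₗ[R] _).toLinearMap ∘ₗ T).flip

@[simp]
theorem rotate_apply (T : M →ₗ[R] N →ₗ[R] P →ₗ[R] Q) (x : M) (y : N) (z : P) :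
    T.rotate z x y = T x y z :=
  rfl

end LinearMap

namespace LinearMap.BilinForm

variable {R L : Type*} [CommRing R] [LieRing L] [LieAlgebra R L]

def lieCyclicForm (B : LinearMap.BilinForm R L) : L →ₗ[R] L →ₗ[R] L →ₗ[R] R :=
  let T := llcomp R L L (L →ₗ[R] R) B ∘ₗ (LieModule.toEnd R L L : L →ₗ[R] Module.End R L)
  T + T.rotate + T.rotate.rotate

@[simp]
theorem lieCyclicForm_apply (B : LinearMap.BilinForm R L) (x y z : L) :
    B.lieCyclicForm x y z = B ⁅x, y⁆ z + B ⁅y, z⁆ x + B ⁅z, x⁆ y := by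
  simp [lieCyclicForm]

theorem forall_lie_cyclic_eq_zero_iff {ι : Type*} (B : LinearMap.BilinForm R L)
    (b : Module.Basis ι R L) :
    (∀ x y z : L, B ⁅x, y⁆ z + B ⁅y, z⁆ x + B ⁅z, x⁆ y = 0) ↔
      ∀ i j k, B ⁅b i, b j⁆ (b k) + B ⁅b j, b k⁆ (b i) + B ⁅b k, b i⁆ (b j) = 0 := by
  simp only [← lieCyclicForm_apply]
  refine ⟨fun h i j k => h _ _ _, fun h x y z => ?_⟩
  have hzero : B.lieCyclicForm = 0 :=
    b.ext fun i => b.ext fun j => b.ext fun k => h i j k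
  simp [hzero]

end LinearMap.BilinForm

namespace Module.Basis

variable {R L ι : Type*} [CommRing R] [LieRing L] [LieAlgebra R L]

theorem repr_lie_cyclic_eq_zero (e : Basis ι R L)
    (h : ∀ a b m, m ≠ a → m ≠ b → e.repr ⁅e a, e b⁆ m = 0) (i j k : ι) :
    e.repr ⁅e i, e j⁆ k + e.repr ⁅e j, e k⁆ i + e.repr ⁅e k, e i⁆ j = 0 := by
  have skew (a b c : ι) : e.repr ⁅e a, e b⁆ c = -e.repr ⁅e b, e a⁆ c := by
    rw [← lie_skew, map_neg, Finsupp.neg_apply]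
  by_cases hij : i = j
  · subst hij; simp [skew k i i]
  by_cases hjk : j = k
  · subst hjk; simp [skew j i j]
  by_cases hki : k = i
  · subst hki; simp [skew k j k]
  rw [h i j k hki (Ne.symm hjk), h j k i hij (Ne.symm hki), h k i j hjk (Ne.symm hij)]
  simp

def SpansIdealFlag [Preorder ι] (e : Basis ι R L) : Prop :=
  ∀ i : ι, ∀ x : L, ∀ y ∈ Submodule.span R (⇑e '' {j | j ≤ i}),
    ⁅x, y⁆ ∈ Submodule.span R (⇑e '' {j | j ≤ i})

section Preorder

variable [Preorder ι] {e : Basis ι R L}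

theorem SpansIdealFlag.repr_lie_basis_eq_zero_of_lt (he : e.SpansIdealFlag) (x : L) {j k : ι}
    (hjk : j < k) : e.repr ⁅x, e j⁆ k = 0 :=
  have hmem := he j x (e j) (Submodule.subset_span ⟨j, le_rfl, rfl⟩)
  Finsupp.notMem_support_iff.mp fun hk => hjk.not_ge (e.mem_span_image.mp hmem hk)

theorem SpansIdealFlag.repr_basis_lie_eq_zero_of_lt (he : e.SpansIdealFlag) (x : L) {i k : ι}
    (hik : i < k) : e.repr ⁅e i, x⁆ k = 0 := by
  rw [← lie_skew, map_neg, Finsupp.neg_apply, he.repr_lie_basis_eq_zero_of_lt x hik, neg_zero]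

end Preorder

theorem SpansIdealFlag.repr_lie_basis_eq_zero_of_ne [LinearOrder ι] {e : Basis ι R L}
    (he : e.SpansIdealFlag)
    (hsymm : ∀ i j k : ι, i < j → j < k → e.repr ⁅e i, e k⁆ j = e.repr ⁅e j, e k⁆ i)
    {a b m : ι} (ha : m ≠ a) (hb : m ≠ b) : e.repr ⁅e a, e b⁆ m = 0 := by
  have below {a b : ι} (hma : m < a) (hab : a < b) : e.repr ⁅e a, e b⁆ m = 0 := by
    rw [← hsymm m a b hma hab, he.repr_basis_lie_eq_zero_of_lt _ hma]
  rcases ha.lt_or_gt with hma | ham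
  · rcases hb.lt_or_gt with hmb | hbm
    · rcases lt_trichotomy a b with hab | rfl | hba
      · exact below hma hab
      · simp
      · rw [← lie_skew, map_neg, Finsupp.neg_apply, below hmb hba, neg_zero]
    · exact he.repr_lie_basis_eq_zero_of_lt _ hbm
  · exact he.repr_basis_lie_eq_zero_of_lt _ ham

end Module.Basis

/-- For a Lie algebra with a full flag of ideals spanned by an
(orthonormal) basis `e₁,…,eₙ`, the inner product making the basis orthonormal is cyclic
iff the structure constants satisfy `c_{ik}^j = c_{jk}^i` for all `i < j < k`. -/
theorem cyclic_iff_structure_constants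
    {g : Type*} [LieRing g] [LieAlgebra ℝ g]
    (n : ℕ) (e : Module.Basis (Fin n) ℝ g)
    (hideal : ∀ i : Fin n, ∀ x : g, ∀ y ∈ Submodule.span ℝ (⇑e '' {j | j ≤ i}),
      ⁅x, y⁆ ∈ Submodule.span ℝ (⇑e '' {j | j ≤ i})) :
    (∀ x y z : g,
        basisInner e ⁅x, y⁆ z + basisInner e ⁅y, z⁆ x + basisInner e ⁅z, x⁆ y = 0)
      ↔ (∀ i j k : Fin n, i < j → j < k →
          e.repr ⁅e i, e k⁆ j = e.repr ⁅e j, e k⁆ i) := by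
  have he : e.SpansIdealFlag := hideal
  simp only [basisInner_eq_toDual, LinearMap.BilinForm.forall_lie_cyclic_eq_zero_iff e.toDual e,
    Module.Basis.toDual_apply_left]
  constructor
  · intro hcyc i j k hij hjk
    have h := hcyc i j k
    rw [he.repr_lie_basis_eq_zero_of_lt _ hjk, he.repr_lie_basis_eq_zero_of_lt _ hij] at h
    rw [he.repr_basis_lie_eq_zero_of_lt _ hij]
    linarith
  · intro hsymm
    exact e.repr_lie_cyclic_eq_zero fun a b m => he.repr_lie_basis_eq_zero_of_ne hsymm

end
end

section
/- Let n ≥ 2, a > 0, and let g be the n-dimensional real vector space with basis e₁,…,eₙ equipped with the bracket determined by [e_i,e_j] = 0 for 1 ≤ i,j ≤ n−1 and [eₙ,e_i] = a·e_i for 1 ≤ i ≤ n−1. Then g is a (solvable) Lie algebra, and the inner product α making e₁,…,eₙ orthonormal is cyclic: α([x,y],z) + α([y,z],x) + α([z,x],y) = 0 for all x,y,z ∈ g. -/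
/-!
On the basis `e`, the given bracket is `[x, y] = φ x • y - φ y • x` for the functional
`φ = a • e.coord ℓ`. For any linear functional `φ` this bracket satisfies the Jacobi identity;
`φ` vanishes on every bracket, so brackets of brackets vanish; and cyclicity with respect to any
symmetric bilinear form is the cancellation of six terms `φ x * B y z` in pairs.
-/

noncomputable section

namespace LinearMap

variable {R M : Type*} [CommRing R] [AddCommGroup M] [Module R M]

def functionalBracket (φ : M →ₗ[R] R) : M →ₗ[R] M →ₗ[R] M :=
  mk₂ R (fun x y => φ x • y - φ y • x)
    (fun x x' y => by simp only [map_add]; module)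
    (fun c x y => by simp only [map_smul, smul_eq_mul]; module)
    (fun x y y' => by simp only [map_add]; module)
    (fun c x y => by simp only [map_smul, smul_eq_mul]; module)

variable (φ : M →ₗ[R] R)

@[simp]
theorem functionalBracket_apply (x y : M) : functionalBracket φ x y = φ x • y - φ y • x :=
  rfl

theorem functionalBracket_self (x : M) : functionalBracket φ x x = 0 :=
  sub_self _

theorem apply_functionalBracket (x y : M) : φ (functionalBracket φ x y) = 0 := by
  simp only [functionalBracket_apply, map_sub, map_smul, smul_eq_mul, mul_comm, sub_self]

theorem functionalBracket_leibniz (x y z : M) :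
    functionalBracket φ x (functionalBracket φ y z) =
      functionalBracket φ (functionalBracket φ x y) z +
        functionalBracket φ y (functionalBracket φ x z) := by
  rw [functionalBracket_apply φ x, functionalBracket_apply φ (functionalBracket φ x y),
    functionalBracket_apply φ y (functionalBracket φ x z), apply_functionalBracket,
    apply_functionalBracket, apply_functionalBracket]
  simp only [functionalBracket_apply]
  module

theorem functionalBracket_functionalBracket (x y z w : M) :
    functionalBracket φ (functionalBracket φ x y) (functionalBracket φ z w) = 0 := by
  rw [functionalBracket_apply, apply_functionalBracket, apply_functionalBracket, zero_smul,
    zero_smul, sub_zero]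

theorem functionalBracket_cyclic (B : M →ₗ[R] M →ₗ[R] R) (hB : ∀ x y, B x y = B y x)
    (x y z : M) :
    B (functionalBracket φ x y) z + B (functionalBracket φ y z) x
      + B (functionalBracket φ z x) y = 0 := by
  simp only [functionalBracket_apply, map_sub, map_smul, sub_apply, smul_apply,
    smul_eq_mul, hB z x, hB z y, hB y x]
  ring

theorem eq_functionalBracket_smul_coord {ι : Type*} (e : Module.Basis ι R M) (a : R) (ℓ : ι)
    (br : M →ₗ[R] M →ₗ[R] M)
    (hbr1 : ∀ i j : ι, i ≠ ℓ → j ≠ ℓ → br (e i) (e j) = 0)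
    (hbr2 : ∀ i : ι, i ≠ ℓ → br (e ℓ) (e i) = a • e i)
    (hbr3 : ∀ i : ι, i ≠ ℓ → br (e i) (e ℓ) = -(a • e i))
    (hbr4 : br (e ℓ) (e ℓ) = 0) :
    br = functionalBracket (a • e.coord ℓ) := by
  classical
  refine ext_basis e e fun i j => ?_
  have coord_e : ∀ k, (a • e.coord ℓ) (e k) = if k = ℓ then a else 0 := fun k => by
    simp [Finsupp.single_apply, eq_comm]
  by_cases hi : i = ℓ <;> by_cases hj : j = ℓ
  · subst hi hj
    simp [hbr4]
  · subst hi
    simp [coord_e, hj, hbr2 j hj]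
  · subst hj
    simp [coord_e, hi, hbr3 i hi]
  · simp [coord_e, hi, hj, hbr1 i j hi hj]

end LinearMap

open LinearMap

theorem basisInner_eq_dotProductBilin {V : Type*} [AddCommGroup V] [Module ℝ V] {ι : Type*}
    [Fintype ι] (e : Module.Basis ι ℝ V) (x y : V) :
    basisInner e x y =
      (dotProductBilin ℝ ℝ).compl₁₂ e.equivFun.toLinearMap e.equivFun.toLinearMap x y :=
  rfl

theorem solvable_example_is_lie_algebra_and_cyclic_general
    {V : Type*} [AddCommGroup V] [Module ℝ V]
    (n : ℕ) (a : ℝ)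
    (e : Module.Basis (Fin n) ℝ V)
    (ℓ : Fin n)
    (br : V →ₗ[ℝ] V →ₗ[ℝ] V)
    (hbr1 : ∀ i j : Fin n, i ≠ ℓ → j ≠ ℓ → br (e i) (e j) = 0)
    (hbr2 : ∀ i : Fin n, i ≠ ℓ → br (e ℓ) (e i) = a • e i)
    (hbr3 : ∀ i : Fin n, i ≠ ℓ → br (e i) (e ℓ) = -(a • e i))
    (hbr4 : br (e ℓ) (e ℓ) = 0) :
    -- `br` is a Lie bracket:
    (∀ x : V, br x x = 0)
      ∧ (∀ x y z : V, br x (br y z) = br (br x y) z + br y (br x z))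
      -- which is solvable:
      ∧ (∀ x y z w : V, br (br x y) (br z w) = 0)
      -- and the inner product making `e` orthonormal is cyclic:
      ∧ (∀ x y z : V,
          basisInner e (br x y) z + basisInner e (br y z) x
            + basisInner e (br z x) y = 0) := by
  obtain rfl := eq_functionalBracket_smul_coord e a ℓ br hbr1 hbr2 hbr3 hbr4
  refine ⟨functionalBracket_self _, functionalBracket_leibniz _,
    functionalBracket_functionalBracket _, fun x y z => ?_⟩
  simp only [basisInner_eq_dotProductBilin]
  exact functionalBracket_cyclic _ _
    (fun u v => dotProduct_comm (e.equivFun u) (e.equivFun v)) x y z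

/-- The bilinear bracket determined by `[e_i,e_j] = 0` for
`i,j ≤ n−1` and `[eₙ,e_i] = a·e_i` makes the `n`-dimensional real vector space a
(solvable) Lie algebra, and the inner product making `e₁,…,eₙ` orthonormal is cyclic. -/
theorem solvable_example_is_lie_algebra_and_cyclic
    {V : Type*} [AddCommGroup V] [Module ℝ V]
    (n : ℕ) (hn : 2 ≤ n) (a : ℝ) (ha : 0 < a)
    (e : Module.Basis (Fin n) ℝ V)
    (ℓ : Fin n) (hℓ : (ℓ : ℕ) = n - 1)
    (br : V →ₗ[ℝ] V →ₗ[ℝ] V)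
    (hbr1 : ∀ i j : Fin n, i ≠ ℓ → j ≠ ℓ → br (e i) (e j) = 0)
    (hbr2 : ∀ i : Fin n, i ≠ ℓ → br (e ℓ) (e i) = a • e i)
    (hbr3 : ∀ i : Fin n, i ≠ ℓ → br (e i) (e ℓ) = -(a • e i))
    (hbr4 : br (e ℓ) (e ℓ) = 0) :
    -- `br` is a Lie bracket:
    (∀ x : V, br x x = 0)
      ∧ (∀ x y z : V, br x (br y z) = br (br x y) z + br y (br x z))
      -- which is solvable:
      ∧ (∀ x y z w : V, br (br x y) (br z w) = 0)
      -- and the inner product making `e` orthonormal is cyclic: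
      ∧ (∀ x y z : V,
          basisInner e (br x y) z + basisInner e (br y z) x
            + basisInner e (br z x) y = 0) :=
  solvable_example_is_lie_algebra_and_cyclic_general n a e ℓ br hbr1 hbr2 hbr3 hbr4

end
end

section
/- Let n ≥ 2, a > 0, and let g be the n-dimensional solvable real Lie algebra with basis e₁,…,eₙ and brackets [e_i,e_j] = 0 for 1 ≤ i,j ≤ n−1 and [eₙ,e_i] = a·e_i for 1 ≤ i ≤ n−1; let α be the inner product on g making e₁,…,eₙ orthonormal and set X = c·eₙ for a real number c. Then for all u,y ∈ g one has a·(α(y,y)·α(X,u) − α(X,y)·α(u,y)) = −c·α([y,u],y). In particular, α([y,u],y)·(α(y,y)·α(X,v) − α(X,y)·α(v,y)) = α([y,v],y)·(α(y,y)·α(X,u) − α(X,y)·α(u,y)) for all u,v,y ∈ g. -/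
/-! In `g` the bracket is `⁅y, u⁆ = φ y • u - φ u • y` with `φ = a • e*ₙ`, so both sides of the
identity are polynomials in `α(y, y)`, `α(u, y)`, `yₙ`, `uₙ`; the second identity is then
symmetric in `u, v` because both of its sides equal
`-a c (yₙ α(u, y) - uₙ α(y, y)) (yₙ α(v, y) - vₙ α(y, y))`. -/

noncomputable section

section basisInner

variable {V : Type*} [AddCommGroup V] [Module ℝ V] {ι : Type*} [Fintype ι]
  (e : Module.Basis ι ℝ V)

lemma basisInner_smul_left (r : ℝ) (x y : V) :
    basisInner e (r • x) y = r * basisInner e x y := by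
  simp [basisInner, Finset.mul_sum, mul_assoc]

lemma basisInner_sub_left (x z y : V) :
    basisInner e (x - z) y = basisInner e x y - basisInner e z y := by
  simp [basisInner, sub_mul, Finset.sum_sub_distrib]

lemma basisInner_basis_left (i : ι) (y : V) : basisInner e (e i) y = e.repr y i := by
  classical
  simp [basisInner, Finsupp.single_apply]

end basisInner

section LieBracket

variable {R L ι : Type*} [CommRing R] [LieRing L] [LieAlgebra R L]

lemma lie_eq_smul_sub_smul_of_basis (b : Module.Basis ι R L) (φ : L →ₗ[R] R)
    (h : ∀ i j, ⁅b i, b j⁆ = φ (b i) • b j - φ (b j) • b i) (x y : L) :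
    ⁅x, y⁆ = φ x • y - φ y • x := by
  let A : L →ₗ[R] L →ₗ[R] L := LinearMap.lsmul R L ∘ₗ φ
  have hB : (LieModule.toEnd R L L : L →ₗ[R] Module.End R L) = A - A.flip :=
    LinearMap.ext_basis b b fun i j => by simpa [A] using h i j
  simpa [A] using LinearMap.congr_fun₂ hB x y

variable [DecidableEq ι] (a : R) (e : Module.Basis ι R L) (ℓ : ι)

lemma lie_eq_smul_sub_smul_coord
    (hbr1 : ∀ i j : ι, i ≠ ℓ → j ≠ ℓ → ⁅e i, e j⁆ = 0)
    (hbr2 : ∀ i : ι, i ≠ ℓ → ⁅e ℓ, e i⁆ = a • e i) (y u : L) :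
    ⁅y, u⁆ = (a * e.repr y ℓ) • u - (a * e.repr u ℓ) • y := by
  refine lie_eq_smul_sub_smul_of_basis e (a • e.coord ℓ) (fun i j => ?_) y u
  by_cases hi : i = ℓ <;> by_cases hj : j = ℓ
  · subst hi hj; simp
  · subst hi; simp [hbr2 j hj, Ne.symm hj]
  · subst hj; rw [← lie_skew, hbr2 i hi]; simp [Ne.symm hi]
  · simp [hbr1 i j hi hj, Ne.symm hi, Ne.symm hj]

end LieBracket

theorem solvable_example_Psi_identity_general
    {g : Type*} [LieRing g] [LieAlgebra ℝ g]
    (n : ℕ) (a : ℝ)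
    (e : Module.Basis (Fin n) ℝ g)
    (ℓ : Fin n)
    (hbr1 : ∀ i j : Fin n, i ≠ ℓ → j ≠ ℓ → ⁅e i, e j⁆ = 0)
    (hbr2 : ∀ i : Fin n, i ≠ ℓ → ⁅e ℓ, e i⁆ = a • e i)
    (c : ℝ) :
    (∀ u y : g,
        a * (basisInner e y y * basisInner e (c • e ℓ) u
            - basisInner e (c • e ℓ) y * basisInner e u y)
          = -c * basisInner e ⁅y, u⁆ y)
      ∧ (∀ u v y : g,
          basisInner e ⁅y, u⁆ y
              * (basisInner e y y * basisInner e (c • e ℓ) v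
                  - basisInner e (c • e ℓ) y * basisInner e v y)
            = basisInner e ⁅y, v⁆ y
              * (basisInner e y y * basisInner e (c • e ℓ) u
                  - basisInner e (c • e ℓ) y * basisInner e u y)) := by
  have hX (x : g) : basisInner e (c • e ℓ) x = c * e.repr x ℓ := by
    rw [basisInner_smul_left, basisInner_basis_left]
  have hlie (y u : g) : basisInner e ⁅y, u⁆ y
      = a * (e.repr y ℓ * basisInner e u y - e.repr u ℓ * basisInner e y y) := by
    rw [lie_eq_smul_sub_smul_coord a e ℓ hbr1 hbr2, basisInner_sub_left, basisInner_smul_left,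
      basisInner_smul_left]
    ring
  refine ⟨fun u y => ?_, fun u v y => ?_⟩
  · rw [hX, hX, hlie]; ring
  · rw [hX, hX, hX, hlie, hlie]; ring

/-- In the solvable Lie algebra with `[e_i,e_j] = 0` (`i,j ≤ n−1`),
`[eₙ,e_i] = a·e_i`, orthonormalizing inner product `α` and `X = c·eₙ`, one has
`a·(α(y,y)α(X,u) − α(X,y)α(u,y)) = −c·α([y,u],y)`, and in particular the identity of
Theorem 1.4 (`Ψ ≡ 0`) holds. -/
theorem solvable_example_Psi_identity
    {g : Type*} [LieRing g] [LieAlgebra ℝ g]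
    (n : ℕ) (hn : 2 ≤ n) (a : ℝ) (ha : 0 < a)
    (e : Module.Basis (Fin n) ℝ g)
    (ℓ : Fin n) (hℓ : (ℓ : ℕ) = n - 1)
    (hbr1 : ∀ i j : Fin n, i ≠ ℓ → j ≠ ℓ → ⁅e i, e j⁆ = 0)
    (hbr2 : ∀ i : Fin n, i ≠ ℓ → ⁅e ℓ, e i⁆ = a • e i)
    (c : ℝ) :
    (∀ u y : g,
        a * (basisInner e y y * basisInner e (c • e ℓ) u
            - basisInner e (c • e ℓ) y * basisInner e u y)
          = -c * basisInner e ⁅y, u⁆ y)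
      ∧ (∀ u v y : g,
          basisInner e ⁅y, u⁆ y
              * (basisInner e y y * basisInner e (c • e ℓ) v
                  - basisInner e (c • e ℓ) y * basisInner e v y)
            = basisInner e ⁅y, v⁆ y
              * (basisInner e y y * basisInner e (c • e ℓ) u
                  - basisInner e (c • e ℓ) y * basisInner e u y)) :=
  solvable_example_Psi_identity_general n a e ℓ hbr1 hbr2 c

end
end

section
/- Let n ≥ 2, a > 0, 0 < |c| < 1, and let g be the n-dimensional solvable real Lie algebra with basis e₁,…,eₙ and brackets [e_i,e_j] = 0 for 1 ≤ i,j ≤ n−1 and [eₙ,e_i] = a·e_i for 1 ≤ i ≤ n−1; let α be the inner product on g making e₁,…,eₙ orthonormal. Then the Randers norm F(y) := √(α(y,y)) + c·α(eₙ,y) is a Minkowski norm on g, and F is cyclic; thus g carries a non-Riemannian cyclic left-invariant Randers metric. -/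
noncomputable section

/-! The basis inner product `α` is the pullback of the Euclidean inner product along the
coordinate map, so `F` is the pullback of the Randers norm `‖y‖ + ⟪β, y⟫` with `β = c • eₙ`,
`‖β‖ = |c| < 1`. Its fundamental tensor is
`g_y(u, v) = F(y)/‖y‖ · (⟪u, v⟫ - ⟪y, u⟫⟪y, v⟫/‖y‖²) + (⟪y, u⟫/‖y‖ + ⟪β, u⟫)(⟪y, v⟫/‖y‖ + ⟪β, v⟫)`,
positive definite by Cauchy–Schwarz since `F(y) > 0`. The bracket has the form
`[x, z] = f(x) z - f(z) x`, and for such a bracket the cyclic sum of any symmetric bilinear form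
vanishes identically. Finally `F(-eₙ) = 1 - c ≠ 1 + c = F(eₙ)`, whereas `√(B(y, y))` is even. -/

open scoped RealInnerProductSpace

section Randers

variable {E : Type*} [NormedAddCommGroup E] [InnerProductSpace ℝ E]

theorem HasDerivAt.norm {f : ℝ → E} {f' : E} {x : ℝ} (hf : HasDerivAt f f' x) (h0 : f x ≠ 0) :
    HasDerivAt (fun t => ‖f t‖) (⟪f x, f'⟫ / ‖f x‖) x := by
  have h := hf.norm_sq.sqrt (by positivity)
  simp only [Real.sqrt_sq (norm_nonneg _)] at h
  convert h using 1
  field_simp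

def randersNorm (β y : E) : ℝ := ‖y‖ + ⟪β, y⟫

theorem HasDerivAt.randersNorm (β : E) {f : ℝ → E} {f' : E} {x : ℝ} (hf : HasDerivAt f f' x)
    (h0 : f x ≠ 0) :
    HasDerivAt (fun t => randersNorm β (f t)) (⟪f x, f'⟫ / ‖f x‖ + ⟪β, f'⟫) x :=
  (hf.norm h0).add (by simpa using (hasDerivAt_const x β).inner ℝ hf)

theorem hasDerivAt_add_smul (w v : E) : HasDerivAt (fun t : ℝ => w + t • v) v 0 := by
  simpa using ((hasDerivAt_id (0 : ℝ)).smul_const v).const_add w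

theorem gTensor_randersNorm (β : E) {y : E} (hy : y ≠ 0) (u v : E) :
    gTensor (randersNorm β) y u v =
      randersNorm β y / ‖y‖ * (⟪u, v⟫ - ⟪y, u⟫ * ⟪y, v⟫ / ‖y‖ ^ 2)
        + (⟪y, u⟫ / ‖y‖ + ⟪β, u⟫) * (⟪y, v⟫ / ‖y‖ + ⟪β, v⟫) := by
  have hline := hasDerivAt_add_smul y u
  have inner_deriv : (fun s : ℝ => deriv (fun t : ℝ => randersNorm β (y + s • u + t • v) ^ 2) 0)
      =ᶠ[nhds 0] fun s => 2 * randersNorm β (y + s • u)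
        * (⟪y + s • u, v⟫ / ‖y + s • u‖ + ⟪β, v⟫) := by
    have hne : ∀ᶠ s : ℝ in nhds 0, y + s • u ≠ 0 :=
      hline.continuousAt.eventually_ne (by simpa using hy)
    filter_upwards [hne] with s hs
    have h := ((hasDerivAt_add_smul (y + s • u) v).randersNorm β (by simpa using hs)).fun_pow 2
    simp only [zero_smul, add_zero] at h
    rw [h.deriv]
    push_cast
    ring
  have h := ((hline.randersNorm β (by simpa using hy)).const_mul 2).fun_mul
    (((hline.inner ℝ (hasDerivAt_const (0 : ℝ) v)).fun_div (hline.norm (by simpa using hy))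
      (by simpa using hy)).add_const ⟪β, v⟫)
  simp only [zero_smul, add_zero, inner_zero_right, zero_add] at h
  rw [gTensor, inner_deriv.deriv_eq, h.deriv]
  have : ‖y‖ ≠ 0 := norm_ne_zero_iff.mpr hy
  field_simp
  ring

theorem randersNorm_pos {β : E} (hβ : ‖β‖ < 1) {y : E} (hy : y ≠ 0) : 0 < randersNorm β y := by
  have hCS : |⟪β, y⟫| ≤ ‖β‖ * ‖y‖ := abs_real_inner_le_norm β y
  have hy' : 0 < ‖y‖ := norm_pos_iff.mpr hy
  unfold randersNorm
  nlinarith [neg_abs_le ⟪β, y⟫]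

theorem randersNorm_smul_of_pos (β : E) {t : ℝ} (ht : 0 < t) (y : E) :
    randersNorm β (t • y) = t * randersNorm β y := by
  simp only [randersNorm, norm_smul, real_inner_smul_right, Real.norm_of_nonneg ht.le]
  ring

theorem gTensor_randersNorm_pos {β : E} (hβ : ‖β‖ < 1) {y : E} (hy : y ≠ 0) {u : E}
    (hu : u ≠ 0) : 0 < gTensor (randersNorm β) y u u := by
  have hF := randersNorm_pos hβ hy
  have hy' : 0 < ‖y‖ := norm_pos_iff.mpr hy
  rw [gTensor_randersNorm β hy]
  rcases (abs_real_inner_le_norm y u).lt_or_eq with hlt | heq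
  · have hcs : ⟪y, u⟫ * ⟪y, u⟫ / ‖y‖ ^ 2 < ⟪u, u⟫ := by
      rw [div_lt_iff₀ (by positivity), real_inner_self_eq_norm_sq, ← abs_mul_abs_self]
      nlinarith [abs_nonneg ⟪y, u⟫]
    have := mul_pos (div_pos hF hy') (sub_pos.mpr hcs)
    nlinarith [mul_self_nonneg (⟪y, u⟫ / ‖y‖ + ⟪β, u⟫)]
  · obtain ⟨r, hr, rfl⟩ := (norm_inner_eq_norm_iff hy hu).mp (by rwa [Real.norm_eq_abs])
    have hrF := mul_ne_zero hr hF.ne'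
    have : randersNorm β y / ‖y‖ * (⟪r • y, r • y⟫ - ⟪y, r • y⟫ * ⟪y, r • y⟫ / ‖y‖ ^ 2)
        + (⟪y, r • y⟫ / ‖y‖ + ⟪β, r • y⟫) * (⟪y, r • y⟫ / ‖y‖ + ⟪β, r • y⟫)
        = (r * randersNorm β y) ^ 2 := by
      simp only [real_inner_smul_right, real_inner_self_eq_norm_sq, norm_smul, mul_pow,
        Real.norm_eq_abs, sq_abs, randersNorm]
      field_simp
      ring
    rw [this]
    positivity

theorem isMinkowskiNorm_randersNorm {β : E} (hβ : ‖β‖ < 1) : IsMinkowskiNorm (randersNorm β) where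
  pos _ := randersNorm_pos hβ
  smooth y hy :=
    ((contDiffAt_norm ℝ hy).add (innerSL ℝ β).contDiff.contDiffAt).contDiffWithinAt
  homog _ ht y := randersNorm_smul_of_pos β ht y
  g_symm y hy u v := by
    rw [gTensor_randersNorm β hy, gTensor_randersNorm β hy, real_inner_comm u v]
    ring
  g_add_left y hy u u' v := by
    simp only [gTensor_randersNorm β hy, inner_add_left, inner_add_right]
    ring
  g_smul_left y hy t u v := by
    simp only [gTensor_randersNorm β hy, real_inner_smul_left, real_inner_smul_right]
    ring
  g_posdef _ hy _ hu := gTensor_randersNorm_pos hβ hy hu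

end Randers

section Transfer

variable {V E : Type*} [NormedAddCommGroup V] [NormedSpace ℝ V] [NormedAddCommGroup E]
  [NormedSpace ℝ E]

theorem gTensor_comp (F : E → ℝ) (φ : V →ₗ[ℝ] E) (y u v : V) :
    gTensor (F ∘ φ) y u v = gTensor F (φ y) (φ u) (φ v) := by
  simp only [gTensor, Function.comp_apply, map_add, map_smul]

theorem IsMinkowskiNorm.comp_continuousLinearEquiv {F : E → ℝ} (hF : IsMinkowskiNorm F)
    (φ : V ≃L[ℝ] E) : IsMinkowskiNorm (F ∘ φ) := by
  have hφ : ∀ {y : V}, y ≠ 0 → φ y ≠ 0 := fun hy => φ.map_ne_zero_iff.mpr hy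
  have hg (y u v : V) : gTensor (F ∘ φ) y u v = gTensor F (φ y) (φ u) (φ v) :=
    gTensor_comp F (φ : V →ₗ[ℝ] E) y u v
  refine ⟨fun y hy => hF.pos _ (hφ hy), ?_, fun t ht y => ?_, fun y hy u v => ?_,
    fun y hy u u' v => ?_, fun y hy t u v => ?_, fun y hy u hu => ?_⟩
  · exact hF.smooth.comp φ.contDiff.contDiffOn fun y hy => hφ hy
  · simp only [Function.comp_apply, map_smul, hF.homog t ht]
  · rw [hg, hg, hF.g_symm _ (hφ hy)]
  · rw [hg, hg, hg, map_add, hF.g_add_left _ (hφ hy)]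
  · rw [hg, hg, map_smul, hF.g_smul_left _ (hφ hy)]
  · rw [hg]
    exact hF.g_posdef _ (hφ hy) _ (hφ hu)

end Transfer

theorem isMinkowskiNorm_sqrt_basisInner_add {V : Type*} [NormedAddCommGroup V]
    [NormedSpace ℝ V] {ι : Type*} [Fintype ι] (e : Module.Basis ι ℝ V) {b : V}
    (hb : basisInner e b b < 1) :
    IsMinkowskiNorm fun y => √(basisInner e y y) + basisInner e b y := by
  have := e.finiteDimensional_of_finite
  let T : V ≃L[ℝ] EuclideanSpace ℝ ι :=
    (e.equivFun.trans (WithLp.linearEquiv 2 ℝ (ι → ℝ)).symm).toContinuousLinearEquiv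
  have hT (x y : V) : basisInner e x y = ⟪T x, T y⟫ := by
    simp [T, basisInner, PiLp.inner_apply, mul_comm]
  have hTb : ‖T b‖ < 1 := by
    rw [hT, real_inner_self_eq_norm_sq] at hb
    nlinarith [norm_nonneg (T b)]
  convert (isMinkowskiNorm_randersNorm hTb).comp_continuousLinearEquiv T using 1
  funext y
  simp [hT, randersNorm]

theorem IsMinkowskiNorm.isCyclicNorm_of_eq_smul_sub_smul {V : Type*} [NormedAddCommGroup V]
    [NormedSpace ℝ V] {F : V → ℝ} (hF : IsMinkowskiNorm F) {L : V →ₗ[ℝ] V →ₗ[ℝ] V}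
    (f : V → ℝ) (hL : ∀ x z, L x z = f x • z - f z • x) : IsCyclicNorm L F := by
  intro y hy x z
  have g_sub (u w v : V) : gTensor F y (u - w) v = gTensor F y u v - gTensor F y w v := by
    rw [sub_eq_add_neg, ← neg_one_smul ℝ w, hF.g_add_left y hy, hF.g_smul_left y hy]
    ring
  simp only [hL, g_sub, hF.g_smul_left y hy]
  rw [hF.g_symm y hy y z, hF.g_symm y hy y x, hF.g_symm y hy x z]
  ring

theorem eq_smul_sub_smul_of_basis {V : Type*} [AddCommGroup V] [Module ℝ V] {ι : Type*}
    (e : Module.Basis ι ℝ V) (ℓ : ι) (a : ℝ) {L : V →ₗ[ℝ] V →ₗ[ℝ] V} (hL : ∀ x, L x x = 0)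
    (hbr1 : ∀ i j, i ≠ ℓ → j ≠ ℓ → L (e i) (e j) = 0)
    (hbr2 : ∀ i, i ≠ ℓ → L (e ℓ) (e i) = a • e i) (x z : V) :
    L x z = (a * e.repr x ℓ) • z - (a * e.repr z ℓ) • x := by
  let M : V →ₗ[ℝ] V →ₗ[ℝ] V := LinearMap.mk₂ ℝ
    (fun x z => (a * e.repr x ℓ) • z - (a * e.repr z ℓ) • x)
    (fun _ _ _ => by simp only [map_add, Finsupp.add_apply]; module)
    (fun _ _ _ => by simp only [map_smul, Finsupp.smul_apply, smul_eq_mul]; module)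
    (fun _ _ _ => by simp only [map_add, Finsupp.add_apply]; module)
    (fun _ _ _ => by simp only [map_smul, Finsupp.smul_apply, smul_eq_mul]; module)
  have hanti (x z : V) : L z x = -L x z := by
    have h := hL (x + z)
    simp only [map_add, LinearMap.add_apply, hL, zero_add, add_zero] at h
    exact eq_neg_of_add_eq_zero_left h
  suffices L = M from congrArg (fun B : V →ₗ[ℝ] V →ₗ[ℝ] V => B x z) this
  refine LinearMap.ext_basis e e fun i j => ?_
  simp only [M, LinearMap.mk₂_apply, Module.Basis.repr_self]
  by_cases hi : i = ℓ <;> by_cases hj : j = ℓ <;> subst_vars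
  · simp [hL]
  · simp [hbr2 j hj, Ne.symm hj]
  · rw [hanti, hbr2 i hi]
    simp [Ne.symm hi]
  · simp [hbr1 i j hi hj, Ne.symm hi, Ne.symm hj]

theorem not_exists_eq_sqrt_bilin_of_ne_neg {V : Type*} [AddCommGroup V] [Module ℝ V]
    {F : V → ℝ} {y : V} (hy : F (-y) ≠ F y) :
    ¬ ∃ B : V →ₗ[ℝ] V →ₗ[ℝ] ℝ, ∀ y : V, F y = √(B y y) := by
  rintro ⟨B, hB⟩
  apply hy
  rw [hB, hB]
  simp

theorem solvable_example_randers_cyclic_general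
    {V : Type*} [NormedAddCommGroup V] [NormedSpace ℝ V]
    (n : ℕ) (a : ℝ)
    (e : Module.Basis (Fin n) ℝ V)
    (ℓ : Fin n)
    (L : V →ₗ[ℝ] V →ₗ[ℝ] V) (hL : IsLieBracket L)
    (hbr1 : ∀ i j : Fin n, i ≠ ℓ → j ≠ ℓ → L (e i) (e j) = 0)
    (hbr2 : ∀ i : Fin n, i ≠ ℓ → L (e ℓ) (e i) = a • e i)
    (c : ℝ) (hc0 : 0 < |c|) (hc1 : |c| < 1)
    (F : V → ℝ)
    (hFdef : ∀ y : V, F y = Real.sqrt (basisInner e y y) + c * basisInner e (e ℓ) y) :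
    IsMinkowskiNorm F ∧ IsCyclicNorm L F
      ∧ ¬ ∃ B : V →ₗ[ℝ] V →ₗ[ℝ] ℝ, ∀ y : V, F y = Real.sqrt (B y y) := by
  have hF : F = fun y => √(basisInner e y y) + basisInner e (c • e ℓ) y := by
    funext y
    simp only [hFdef, basisInner, map_smul, Finsupp.smul_apply, smul_eq_mul, Finset.mul_sum,
      mul_assoc]
  have hmink : IsMinkowskiNorm F := by
    rw [hF]
    refine isMinkowskiNorm_sqrt_basisInner_add e ?_
    have hcc : basisInner e (c • e ℓ) (c • e ℓ) = |c| ^ 2 := by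
      simp [basisInner, Finsupp.single_apply, sq]
    rw [hcc]
    nlinarith [abs_nonneg c]
  refine ⟨hmink, hmink.isCyclicNorm_of_eq_smul_sub_smul _
    (eq_smul_sub_smul_of_basis e ℓ a hL.alternate hbr1 hbr2), ?_⟩
  refine not_exists_eq_sqrt_bilin_of_ne_neg (y := e ℓ) ?_
  simpa [hFdef, basisInner, Finsupp.single_apply, CharZero.neg_eq_self_iff] using abs_pos.mp hc0

/-- On the solvable Lie algebra with `[e_i,e_j] = 0` (`i,j ≤ n−1`) and
`[eₙ,e_i] = a·e_i` (`a > 0`), for `0 < |c| < 1` the Randers norm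
`F(y) = √(α(y,y)) + c·α(eₙ,y)` (with `α` the inner product making `e` orthonormal) is a
Minkowski norm and is cyclic; it is moreover non-Riemannian. -/
theorem solvable_example_randers_cyclic
    {V : Type*} [NormedAddCommGroup V] [NormedSpace ℝ V] [FiniteDimensional ℝ V]
    (n : ℕ) (hn : 2 ≤ n) (a : ℝ) (ha : 0 < a)
    (e : Module.Basis (Fin n) ℝ V)
    (ℓ : Fin n) (hℓ : (ℓ : ℕ) = n - 1)
    (L : V →ₗ[ℝ] V →ₗ[ℝ] V) (hL : IsLieBracket L)
    (hbr1 : ∀ i j : Fin n, i ≠ ℓ → j ≠ ℓ → L (e i) (e j) = 0)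
    (hbr2 : ∀ i : Fin n, i ≠ ℓ → L (e ℓ) (e i) = a • e i)
    (c : ℝ) (hc0 : 0 < |c|) (hc1 : |c| < 1)
    (F : V → ℝ)
    (hFdef : ∀ y : V, F y = Real.sqrt (basisInner e y y) + c * basisInner e (e ℓ) y) :
    IsMinkowskiNorm F ∧ IsCyclicNorm L F
      ∧ ¬ ∃ B : V →ₗ[ℝ] V →ₗ[ℝ] ℝ, ∀ y : V, F y = Real.sqrt (B y y) :=
  solvable_example_randers_cyclic_general n a e ℓ L hL hbr1 hbr2 c hc0 hc1 F hFdef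
end
end
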